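/- arXiv:1701.08230 — 6 statements merged into one kernel-verified Lean document; each statement's English description precedes it below -/
import Mathlib

section
/- Fix c with 0 < c < 1 and suppose μ(p(X) = c) = 0. Let d*(x) = 1 if p(x) ≥ c and d*(x) = 0 otherwise. If a decision rule d satisfies u(d,c) = u(d*,c), then d(X) = d*(X) μ-almost surely. -/
open MeasureTheory ProbabilityTheory Set

noncomputable section

/-- If `μ(p(X) = c) = 0` and a decision rule `d` satisfies
`u(d,c) = u(d*,c)` for the threshold rule `d*(x) = 1{p(x) ≥ c}`, then
`d(X) = d*(X)` μ-almost surely. -/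
theorem stmt_2
    {Ω 𝒳 : Type*} [MeasurableSpace Ω] [MeasurableSpace 𝒳]
    (μ : Measure Ω) [IsProbabilityMeasure μ]
    (X : Ω → 𝒳) (hX : Measurable X)
    (Y : Ω → ℝ) (hY : Measurable Y) (hY01 : ∀ ω, Y ω = 0 ∨ Y ω = 1)
    (p : 𝒳 → ℝ) (hp : Measurable p) (hp01 : ∀ x, p x ∈ Icc (0:ℝ) 1)
    (hrisk : ∀ f : 𝒳 → ℝ, Measurable f → (∃ C, ∀ x, |f x| ≤ C) →
      ∫ ω, Y ω * f (X ω) ∂μ = ∫ ω, p (X ω) * f (X ω) ∂μ)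
    (c : ℝ) (hc0 : 0 < c) (hc1 : c < 1)
    (hatom : μ {ω | p (X ω) = c} = 0)
    (d : 𝒳 → ℝ) (hd : Measurable d) (hd01 : ∀ x, d x ∈ Icc (0:ℝ) 1)
    (hu : (∫ ω, Y ω * d (X ω) ∂μ) - c * ∫ ω, d (X ω) ∂μ
        = (∫ ω, Y ω * (if c ≤ p (X ω) then (1:ℝ) else 0) ∂μ)
            - c * ∫ ω, (if c ≤ p (X ω) then (1:ℝ) else 0) ∂μ) :
    ∀ᵐ ω ∂μ, d (X ω) = (if c ≤ p (X ω) then (1:ℝ) else 0) := by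
  set g : 𝒳 → ℝ := fun x => if c ≤ p x then (1:ℝ) else 0 with hgdef
  have hgm : Measurable g :=
    Measurable.ite (measurableSet_le measurable_const hp) measurable_const measurable_const
  have hg01 : ∀ x, g x ∈ Icc (0:ℝ) 1 := by
    intro x; by_cases h : c ≤ p x <;> simp [hgdef, h]
  -- integrability helper
  have integ : ∀ (h : Ω → ℝ), Measurable h → (∀ ω, |h ω| ≤ (2:ℝ)) → Integrable h μ := by
    intro h hm hb
    refine Integrable.mono' (integrable_const 2) hm.aestronglyMeasurable ?_
    exact ae_of_all _ fun ω => by simpa [Real.norm_eq_abs] using hb ω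
  have key : ∀ (f : 𝒳 → ℝ), Measurable f → (∀ x, f x ∈ Icc (0:ℝ) 1) →
      ∫ ω, (p (X ω) - c) * f (X ω) ∂μ
        = (∫ ω, Y ω * f (X ω) ∂μ) - c * ∫ ω, f (X ω) ∂μ := by
    intro f hfm hf01
    have habs : ∀ x, |f x| ≤ (1:ℝ) := fun x => abs_le.2 ⟨by linarith [(hf01 x).1], (hf01 x).2⟩
    have h1 : Integrable (fun ω => p (X ω) * f (X ω)) μ := by
      refine integ _ ((hp.comp hX).mul (hfm.comp hX)) fun ω => ?_
      have := hp01 (X ω); have := hf01 (X ω)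
      rw [abs_mul]
      calc |p (X ω)| * |f (X ω)| ≤ 1 * 1 := by
            apply mul_le_mul _ (habs _) (abs_nonneg _) zero_le_one
            exact abs_le.2 ⟨by linarith [(hp01 (X ω)).1], (hp01 (X ω)).2⟩
        _ ≤ 2 := by norm_num
    have h2 : Integrable (fun ω => c * f (X ω)) μ := by
      refine integ _ (measurable_const.mul (hfm.comp hX)) fun ω => ?_
      rw [abs_mul]
      calc |c| * |f (X ω)| ≤ 1 * 1 := by
            apply mul_le_mul _ (habs _) (abs_nonneg _) zero_le_one
            exact abs_le.2 ⟨by linarith, by linarith⟩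
        _ ≤ 2 := by norm_num
    have expand : (fun ω => (p (X ω) - c) * f (X ω))
        = fun ω => p (X ω) * f (X ω) - c * f (X ω) := by
      funext ω; ring
    rw [expand, integral_sub h1 h2, integral_const_mul,
      hrisk f hfm ⟨1, habs⟩]
  -- the function whose integral vanishes
  have hYeq := hrisk d hd ⟨1, fun x => abs_le.2 ⟨by linarith [(hd01 x).1], (hd01 x).2⟩⟩
  have hIzero : ∫ ω, (p (X ω) - c) * (g (X ω) - d (X ω)) ∂μ = 0 := by
    have expand : (fun ω => (p (X ω) - c) * (g (X ω) - d (X ω)))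
        = fun ω => (p (X ω) - c) * g (X ω) - (p (X ω) - c) * d (X ω) := by
      funext ω; ring
    have hintg : Integrable (fun ω => (p (X ω) - c) * g (X ω)) μ := by
      refine integ _ (((hp.comp hX).sub measurable_const).mul (hgm.comp hX)) fun ω => ?_
      rw [abs_mul]
      have h1 : |p (X ω) - c| ≤ 2 := abs_le.2 ⟨by linarith [(hp01 (X ω)).1], by linarith [(hp01 (X ω)).2]⟩
      have h2 : |g (X ω)| ≤ 1 := abs_le.2 ⟨by linarith [(hg01 (X ω)).1], (hg01 (X ω)).2⟩
      calc |p (X ω) - c| * |g (X ω)| ≤ 2 * 1 :=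
            mul_le_mul h1 h2 (abs_nonneg _) (by norm_num)
        _ = 2 := by norm_num
    have hintd : Integrable (fun ω => (p (X ω) - c) * d (X ω)) μ := by
      refine integ _ (((hp.comp hX).sub measurable_const).mul (hd.comp hX)) fun ω => ?_
      rw [abs_mul]
      have h1 : |p (X ω) - c| ≤ 2 := abs_le.2 ⟨by linarith [(hp01 (X ω)).1], by linarith [(hp01 (X ω)).2]⟩
      have h2 : |d (X ω)| ≤ 1 := abs_le.2 ⟨by linarith [(hd01 (X ω)).1], (hd01 (X ω)).2⟩
      calc |p (X ω) - c| * |d (X ω)| ≤ 2 * 1 :=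
            mul_le_mul h1 h2 (abs_nonneg _) (by norm_num)
        _ = 2 := by norm_num
    rw [expand, integral_sub hintg hintd, key g hgm hg01, key d hd hd01]
    have : (∫ ω, Y ω * g (X ω) ∂μ) - c * ∫ ω, g (X ω) ∂μ
        = (∫ ω, Y ω * d (X ω) ∂μ) - c * ∫ ω, d (X ω) ∂μ := by
      rw [hu]
    linarith [this]
  have hnonneg : ∀ ω, 0 ≤ (p (X ω) - c) * (g (X ω) - d (X ω)) := by
    intro ω
    by_cases h : c ≤ p (X ω)
    · have hg : g (X ω) = 1 := by simp [hgdef, h]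
      have := (hd01 (X ω)).2
      apply mul_nonneg (by linarith) (by rw [hg]; linarith)
    · have hg : g (X ω) = 0 := by simp [hgdef, h]
      push_neg at h
      have := (hd01 (X ω)).1
      have h2 : g (X ω) - d (X ω) ≤ 0 := by rw [hg]; linarith
      have : (p (X ω) - c) * (g (X ω) - d (X ω)) = (c - p (X ω)) * (d (X ω) - g (X ω)) := by ring
      rw [this]
      exact mul_nonneg (by linarith) (by linarith)
  have hinth : Integrable (fun ω => (p (X ω) - c) * (g (X ω) - d (X ω))) μ := by
    refine integ _ (((hp.comp hX).sub measurable_const).mul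
      ((hgm.comp hX).sub (hd.comp hX))) fun ω => ?_
    rw [abs_mul]
    have h1 : |p (X ω) - c| ≤ 1 := abs_le.2 ⟨by linarith [(hp01 (X ω)).1], by linarith [(hp01 (X ω)).2]⟩
    have h2 : |g (X ω) - d (X ω)| ≤ 2 := abs_le.2
      ⟨by linarith [(hg01 (X ω)).1, (hd01 (X ω)).2], by linarith [(hg01 (X ω)).2, (hd01 (X ω)).1]⟩
    calc |p (X ω) - c| * |g (X ω) - d (X ω)| ≤ 1 * 2 :=
          mul_le_mul h1 h2 (abs_nonneg _) zero_le_one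
      _ = 2 := by norm_num
  have hae : ∀ᵐ ω ∂μ, (p (X ω) - c) * (g (X ω) - d (X ω)) = 0 := by
    have := (integral_eq_zero_iff_of_nonneg_ae (ae_of_all _ hnonneg) hinth).1 hIzero
    filter_upwards [this] with ω hω
    exact hω
  have hne : ∀ᵐ ω ∂μ, p (X ω) ≠ c := by
    rw [ae_iff]
    simpa using hatom
  filter_upwards [hae, hne] with ω h0 hne
  have hpc : p (X ω) - c ≠ 0 := sub_ne_zero.2 hne
  have := (mul_eq_zero.1 h0).resolve_left hpc
  have : g (X ω) = d (X ω) := by linarith [sub_eq_zero.1 this]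
  simpa [hgdef] using this.symm
end
end

section
/- Fix c with 0 < c < 1, and suppose that for every group a ∈ G the conditional law of p(X) given g(X) = a has positive density on [0,1]. Then there exist constants t_a ∈ [0,1] for a ∈ G such that the decision rule d*(x) = 1 if p(x) ≥ t_{g(x)} and d*(x) = 0 otherwise satisfies statistical parity, and u(d,c) ≤ u(d*,c) for every decision rule d satisfying statistical parity. -/
open MeasureTheory ProbabilityTheory Set

noncomputable section

/-- A probability law on ℝ has positive density on `[0,1]`: it is absolutely continuous
w.r.t. Lebesgue measure with a density strictly positive Lebesgue-a.e. on `[0,1]`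
that vanishes outside `[0,1]`. -/
def PosDensity01 (ν : Measure ℝ) : Prop :=
  ∃ φ : ℝ → ENNReal,
    ν = volume.withDensity φ ∧
    (∀ᵐ x ∂(volume.restrict (Icc (0:ℝ) 1)), 0 < φ x) ∧
    (∀ᵐ x ∂(volume : Measure ℝ), x ∉ Icc (0:ℝ) 1 → φ x = 0)

/-- A decision rule `d` satisfies statistical parity:
`E[d(X) | g(X) = a] = E[d(X)]` for every group `a`. -/
def StatParity {Ω 𝒳 G : Type*} [MeasurableSpace Ω]
    (μ : Measure Ω) (X : Ω → 𝒳) (g : 𝒳 → G) (d : 𝒳 → ℝ) : Prop :=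
  ∀ a : G, (∫ ω in {ω | g (X ω) = a}, d (X ω) ∂μ) / (μ {ω | g (X ω) = a}).toReal
    = ∫ ω, d (X ω) ∂μ

/-! Write `w_a = P(g(X) = a)` and `ν_a` for the law of `p(X)` given `g(X) = a`. As `ν_a` has no
atoms and lives on `[0,1]`, every rate `β ∈ [0,1]` is the mass `ν_a [t_a(β), ∞)` of some
`t_a(β) ∈ [0,1]`, and thresholding group `a` at `t_a(β)` gives a rule with acceptance rate `β`
in every group. A parity rule with acceptance rate `β` does no better, group by group, than this
threshold rule (Neyman–Pearson, since `E[Y f(X)] = E[p(X) f(X)]`), whose utility is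
`V(β) = ∑ₐ w_a ∫_{[t_a(β), ∞)} x dν_a - c β`. For `s ≤ t` the partial means over `[s, ∞)` and
`[t, ∞)` differ by at most `ν_a [s, t)`, so each summand of `V` is 1-Lipschitz in `β`; hence `V`
attains its maximum on `[0,1]` at some `β*`, and the thresholds `t_a(β*)` are optimal. -/

namespace PosDensity01

variable {ν : Measure ℝ}

lemma nullSingletonClass (hν : PosDensity01 ν) : NullSingletonClass ν := by
  obtain ⟨φ, rfl, -, -⟩ := hν
  infer_instance

lemma ae_mem_Icc (hν : PosDensity01 ν) : ∀ᵐ x ∂ν, x ∈ Icc (0:ℝ) 1 := by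
  obtain ⟨φ, rfl, -, hφ⟩ := hν
  rw [ae_iff, ← compl_def, withDensity_apply _ measurableSet_Icc.compl]
  refine (lintegral_congr_ae ?_).trans lintegral_zero
  exact (ae_restrict_iff' measurableSet_Icc.compl).2 hφ

end PosDensity01

section UpperTail

variable {ν : Measure ℝ}

def upperTail (ν : Measure ℝ) (t : ℝ) : ℝ := ν.real (Ici t)

def upperMean (ν : Measure ℝ) (t : ℝ) : ℝ := ∫ x in Ici t, x ∂ν

/-- A level `t ∈ [0,1]` with `upperTail ν t = β`; an arbitrary value if there is none. -/
def threshold (ν : Measure ℝ) (β : ℝ) : ℝ := Function.invFunOn (upperTail ν) (Icc 0 1) β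

lemma continuous_upperTail [IsFiniteMeasure ν] [NullSingletonClass ν] :
    Continuous (upperTail ν) := by
  refine continuous_iff_continuousAt.2 fun t => ?_
  have h := (integrable_const (1:ℝ)).integrableOn.continuousOn_Ici_primitive_Ici
    (μ := ν) (a₀ := t - 1)
  simp only [setIntegral_const, smul_eq_mul, mul_one] at h
  exact h.continuousAt (Ici_mem_nhds (sub_one_lt t))

lemma upperTail_zero [IsProbabilityMeasure ν] (h01 : ∀ᵐ x ∂ν, x ∈ Icc (0:ℝ) 1) :
    upperTail ν 0 = 1 := by
  have h := (ae_mem_iff_measure_eq measurableSet_Ici.nullMeasurableSet).1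
    (h01.mono fun x hx => show x ∈ Ici 0 from hx.1)
  simp [upperTail, measureReal_def, h]

lemma upperTail_one [NullSingletonClass ν] (h01 : ∀ᵐ x ∂ν, x ∈ Icc (0:ℝ) 1) :
    upperTail ν 1 = 0 := by
  have h : ν (Ioi 1) = 0 := measure_mono_null (fun x (hx : 1 < x) (h : x ∈ Icc (0:ℝ) 1) =>
    hx.not_ge h.2) (ae_iff.1 h01)
  simp [upperTail, measureReal_def, measure_congr Ioi_ae_eq_Ici.symm, h]

lemma surjOn_upperTail [IsProbabilityMeasure ν] [NullSingletonClass ν]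
    (h01 : ∀ᵐ x ∂ν, x ∈ Icc (0:ℝ) 1) : SurjOn (upperTail ν) (Icc 0 1) (Icc 0 1) := by
  have h := intermediate_value_Icc' zero_le_one continuous_upperTail.continuousOn (f := upperTail ν)
  rwa [upperTail_zero h01, upperTail_one h01] at h

variable {β : ℝ}

lemma threshold_mem [IsProbabilityMeasure ν] [NullSingletonClass ν]
    (h01 : ∀ᵐ x ∂ν, x ∈ Icc (0:ℝ) 1) (hβ : β ∈ Icc (0:ℝ) 1) : threshold ν β ∈ Icc 0 1 :=
  Function.invFunOn_mem (surjOn_upperTail h01 hβ)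

lemma upperTail_threshold [IsProbabilityMeasure ν] [NullSingletonClass ν]
    (h01 : ∀ᵐ x ∂ν, x ∈ Icc (0:ℝ) 1) (hβ : β ∈ Icc (0:ℝ) 1) : upperTail ν (threshold ν β) = β :=
  Function.invFunOn_eq (surjOn_upperTail h01 hβ)

lemma abs_upperMean_sub_le [IsFiniteMeasure ν] (h01 : ∀ᵐ x ∂ν, x ∈ Icc (0:ℝ) 1) (s t : ℝ) :
    |upperMean ν s - upperMean ν t| ≤ |upperTail ν s - upperTail ν t| := by
  wlog hst : s ≤ t generalizing s t
  · rw [abs_sub_comm, abs_sub_comm (upperTail ν s)]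
    exact this t s (le_of_not_ge hst)
  have hid : Integrable (fun x : ℝ => x) ν := by
    refine (integrable_const (1:ℝ)).mono' measurable_id.aestronglyMeasurable ?_
    filter_upwards [h01] with x hx
    rw [Real.norm_eq_abs, abs_le]
    exact ⟨by linarith [hx.1], hx.2⟩
  have hmean : upperMean ν s - upperMean ν t = ∫ x in Ico s t, x ∂ν :=
    intervalIntegral.integral_Ici_sub_Ici hid.integrableOn hst
  have htail : upperTail ν s - upperTail ν t = ν.real (Ico s t) := by
    simpa [upperTail, setIntegral_const] using
      intervalIntegral.integral_Ici_sub_Ici (integrable_const (1:ℝ)).integrableOn hst (μ := ν)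
  have hIco := ae_restrict_of_ae (s := Ico s t) h01
  have h0 : 0 ≤ ∫ x in Ico s t, x ∂ν := integral_nonneg_of_ae (hIco.mono fun x hx => hx.1)
  have h1 : ∫ x in Ico s t, x ∂ν ≤ ν.real (Ico s t) := by
    simpa [setIntegral_const] using
      integral_mono_ae hid.integrableOn (integrable_const (1:ℝ)) (hIco.mono fun x hx => hx.2)
  rwa [hmean, htail, abs_of_nonneg h0, abs_of_nonneg measureReal_nonneg]

lemma lipschitzOnWith_upperMean_threshold [IsProbabilityMeasure ν] [NullSingletonClass ν]
    (h01 : ∀ᵐ x ∂ν, x ∈ Icc (0:ℝ) 1) :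
    LipschitzOnWith 1 (fun β => upperMean ν (threshold ν β)) (Icc 0 1) := by
  refine LipschitzOnWith.of_dist_le_mul fun β₁ h₁ β₂ h₂ => ?_
  simpa only [NNReal.coe_one, one_mul, Real.dist_eq, upperTail_threshold h01 h₁,
    upperTail_threshold h01 h₂] using abs_upperMean_sub_le h01 (threshold ν β₁) (threshold ν β₂)

end UpperTail

section Conditioning

variable {Ω : Type*} [MeasurableSpace Ω] {μ : Measure Ω}

lemma integrable_of_mem_Icc [IsFiniteMeasure μ] {f : Ω → ℝ} (hf : AEStronglyMeasurable f μ)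
    (h01 : ∀ ω, f ω ∈ Icc (0:ℝ) 1) : Integrable f μ :=
  Integrable.of_bound hf 1 (ae_of_all _ fun ω => by
    rw [Real.norm_eq_abs, abs_le]
    exact ⟨by linarith [(h01 ω).1], (h01 ω).2⟩)

lemma integral_mem_Icc_of_mem_Icc [IsProbabilityMeasure μ] {f : Ω → ℝ}
    (hf : AEStronglyMeasurable f μ) (h01 : ∀ ω, f ω ∈ Icc (0:ℝ) 1) :
    ∫ ω, f ω ∂μ ∈ Icc (0:ℝ) 1 :=
  ⟨integral_nonneg fun ω => (h01 ω).1, by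
    simpa using integral_mono (integrable_of_mem_Icc hf h01) (integrable_const (1:ℝ))
      fun ω => (h01 ω).2⟩

variable [IsFiniteMeasure μ]

lemma setIntegral_comp_eq_measureReal_mul_integral_map_cond {β : Type*} [MeasurableSpace β]
    {Z : Ω → β} (hZ : Measurable Z) (s : Set Ω) {f : β → ℝ}
    (hf : AEStronglyMeasurable f ((μ[|s]).map Z)) :
    ∫ ω in s, f (Z ω) ∂μ = μ.real s * ∫ x, f x ∂(μ[|s]).map Z := by
  rw [integral_map hZ.aemeasurable hf, ProbabilityTheory.cond, integral_smul_measure,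
    smul_eq_mul, ← mul_assoc, ENNReal.toReal_inv, ← measureReal_def]
  rcases eq_or_ne (μ.real s) 0 with hs | hs
  · rw [Measure.restrict_eq_zero.2 ((measureReal_eq_zero_iff).1 hs), integral_zero_measure]
    simp
  · rw [mul_inv_cancel₀ hs, one_mul]

variable {Z : Ω → ℝ}

lemma setIntegral_mul_ite_eq (hZ : Measurable Z) (s : Set Ω) {f : ℝ → ℝ} (hf : Measurable f)
    (τ : ℝ) :
    ∫ ω in s, f (Z ω) * (if τ ≤ Z ω then 1 else 0) ∂μ
      = μ.real s * ∫ x in Ici τ, f x ∂(μ[|s]).map Z := by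
  have hfτ : (fun x => f x * if τ ≤ x then (1:ℝ) else 0) = (Ici τ).indicator f := by
    ext x
    by_cases h : τ ≤ x <;> simp [h]
  rw [← integral_indicator measurableSet_Ici, ← hfτ]
  exact setIntegral_comp_eq_measureReal_mul_integral_map_cond (μ := μ) hZ s
    (hfτ ▸ (hf.indicator measurableSet_Ici).aestronglyMeasurable)

lemma setIntegral_ite_eq_mul_upperTail (hZ : Measurable Z) (s : Set Ω) (τ : ℝ) :
    ∫ ω in s, (if τ ≤ Z ω then 1 else 0) ∂μ = μ.real s * upperTail ((μ[|s]).map Z) τ := by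
  simpa [upperTail, setIntegral_const] using
    setIntegral_mul_ite_eq (μ := μ) hZ s (f := fun _ => 1) measurable_const τ

lemma setIntegral_mul_ite_eq_mul_upperMean (hZ : Measurable Z) (s : Set Ω) (τ : ℝ) :
    ∫ ω in s, Z ω * (if τ ≤ Z ω then 1 else 0) ∂μ = μ.real s * upperMean ((μ[|s]).map Z) τ :=
  setIntegral_mul_ite_eq hZ s measurable_id τ

end Conditioning

lemma integral_mul_le_integral_mul_ite {Ω : Type*} [MeasurableSpace Ω] {μ : Measure Ω}
    [IsFiniteMeasure μ] {q d : Ω → ℝ} (hq : Measurable q) (hq_int : Integrable q μ)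
    (hd : Measurable d) (hd01 : ∀ ω, d ω ∈ Icc (0:ℝ) 1) (τ : ℝ)
    (hrate : ∫ ω, d ω ∂μ = ∫ ω, (if τ ≤ q ω then 1 else 0) ∂μ) :
    ∫ ω, q ω * d ω ∂μ ≤ ∫ ω, q ω * (if τ ≤ q ω then 1 else 0) ∂μ := by
  set e : Ω → ℝ := fun ω => if τ ≤ q ω then 1 else 0
  have he : Measurable e :=
    Measurable.ite (measurableSet_le measurable_const hq) measurable_const measurable_const
  have he01 : ∀ ω, e ω ∈ Icc (0:ℝ) 1 := fun ω => by
    by_cases h : τ ≤ q ω <;> simp [e, h]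
  -- `e` accepts exactly where `q - τ ≥ 0`
  have hpoint : ∀ ω, (q ω - τ) * d ω ≤ (q ω - τ) * e ω := fun ω => by
    by_cases h : τ ≤ q ω
    · simpa [e, h] using mul_le_mul_of_nonneg_left (hd01 ω).2 (sub_nonneg.2 h)
    · simpa [e, h] using mul_nonpos_of_nonpos_of_nonneg (by linarith) (hd01 ω).1
  have hexpand : ∀ r : Ω → ℝ, Measurable r → (∀ ω, r ω ∈ Icc (0:ℝ) 1) →
      Integrable (fun ω => (q ω - τ) * r ω) μ ∧
      ∫ ω, (q ω - τ) * r ω ∂μ = ∫ ω, q ω * r ω ∂μ - τ * ∫ ω, r ω ∂μ := by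
    intro r hr hr01
    have hr_int : Integrable r μ := integrable_of_mem_Icc hr.aestronglyMeasurable hr01
    have hqr : Integrable (fun ω => q ω * r ω) μ :=
      hq_int.mul_bdd hr.aestronglyMeasurable (ae_of_all _ fun ω => by
        rw [Real.norm_eq_abs, abs_le]
        exact ⟨by linarith [(hr01 ω).1], (hr01 ω).2⟩)
    simp only [sub_mul]
    exact ⟨hqr.sub (hr_int.const_mul τ),
      by rw [integral_sub hqr (hr_int.const_mul τ), integral_const_mul]⟩
  obtain ⟨hd_int, hd_eq⟩ := hexpand d hd hd01
  obtain ⟨he_int, he_eq⟩ := hexpand e he he01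
  have h := integral_mono hd_int he_int hpoint
  rw [hd_eq, he_eq, hrate] at h
  linarith

section Fibers

variable {Ω G : Type*} [MeasurableSpace Ω] {μ : Measure Ω} [MeasurableSpace G]
  [MeasurableSingletonClass G] {κ : Ω → G}

lemma setIntegral_fiber_congr (hκ : Measurable κ) (a : G) (h : G → Ω → ℝ) :
    ∫ ω in {ω | κ ω = a}, h (κ ω) ω ∂μ = ∫ ω in {ω | κ ω = a}, h a ω ∂μ :=
  setIntegral_congr_fun (hκ (measurableSet_singleton a)) fun ω (hω : κ ω = a) => by rw [hω]

variable [Fintype G]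

lemma integral_eq_sum_setIntegral_fiber (hκ : Measurable κ) {f : Ω → ℝ} (hf : Integrable f μ) :
    ∫ ω, f ω ∂μ = ∑ a, ∫ ω in {ω | κ ω = a}, f ω ∂μ := by
  have hcover : (⋃ a, {ω | κ ω = a}) = univ := by
    ext ω
    simp
  rw [← integral_iUnion_fintype (s := fun a => {ω | κ ω = a})
    (fun a => hκ (measurableSet_singleton a))
    (fun a b hab => disjoint_left.2 fun ω ha hb => hab (ha.symm.trans hb))
    (fun _ => hf.integrableOn), hcover, setIntegral_univ]

lemma sum_measureReal_fiber [IsProbabilityMeasure μ] (hκ : Measurable κ) :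
    ∑ a, μ.real {ω | κ ω = a} = 1 := by
  simpa [setIntegral_const] using
    (integral_eq_sum_setIntegral_fiber hκ (integrable_const (1:ℝ) (μ := μ))).symm

end Fibers

lemma statParity_iff {Ω 𝒳 G : Type*} [MeasurableSpace Ω] {μ : Measure Ω} [IsFiniteMeasure μ]
    {X : Ω → 𝒳} {g : 𝒳 → G} (hgpos : ∀ a, 0 < μ {ω | g (X ω) = a}) {d : 𝒳 → ℝ} :
    StatParity μ X g d ↔ ∀ a, ∫ ω in {ω | g (X ω) = a}, d (X ω) ∂μ
      = μ.real {ω | g (X ω) = a} * ∫ ω, d (X ω) ∂μ := by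
  refine forall_congr' fun a => ?_
  rw [div_eq_iff (ENNReal.toReal_pos (hgpos a).ne' (measure_ne_top _ _)).ne', mul_comm]
  rfl

section GroupThresholds

variable {Ω 𝒳 G : Type*} [MeasurableSpace Ω]

def groupLaw (μ : Measure Ω) (X : Ω → 𝒳) (p : 𝒳 → ℝ) (g : 𝒳 → G) (a : G) : Measure ℝ :=
  (μ[|{ω | g (X ω) = a}]).map fun ω => p (X ω)

def parityThreshold (μ : Measure Ω) (X : Ω → 𝒳) (p : 𝒳 → ℝ) (g : 𝒳 → G) (β : ℝ) (a : G) : ℝ :=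
  threshold (groupLaw μ X p g a) β

/-- `u(d*, c)` for the rule `d*` with thresholds `parityThreshold μ X p g β`, computed group by
group with `p(X)` in place of `Y`. -/
def thresholdUtility [Fintype G] (μ : Measure Ω) (X : Ω → 𝒳) (p : 𝒳 → ℝ) (g : 𝒳 → G)
    (c β : ℝ) : ℝ :=
  ∑ a, μ.real {ω | g (X ω) = a} * upperMean (groupLaw μ X p g a) (parityThreshold μ X p g β a)
    - c * β

variable [MeasurableSpace 𝒳] {μ : Measure Ω} [IsProbabilityMeasure μ] {X : Ω → 𝒳}
  {p : 𝒳 → ℝ} {g : 𝒳 → G}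

lemma isProbabilityMeasure_groupLaw (hX : Measurable X) (hp : Measurable p) {a : G}
    (ha : 0 < μ {ω | g (X ω) = a}) : IsProbabilityMeasure (groupLaw μ X p g a) :=
  haveI := cond_isProbabilityMeasure ha.ne'
  Measure.isProbabilityMeasure_map (hp.comp hX).aemeasurable

lemma parityThreshold_spec (hX : Measurable X) (hp : Measurable p) {a : G}
    (ha : 0 < μ {ω | g (X ω) = a}) (hdens : PosDensity01 (groupLaw μ X p g a)) {β : ℝ}
    (hβ : β ∈ Icc (0:ℝ) 1) :
    parityThreshold μ X p g β a ∈ Icc 0 1 ∧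
      upperTail (groupLaw μ X p g a) (parityThreshold μ X p g β a) = β :=
  haveI := isProbabilityMeasure_groupLaw hX hp ha
  haveI := hdens.nullSingletonClass
  ⟨threshold_mem hdens.ae_mem_Icc hβ, upperTail_threshold hdens.ae_mem_Icc hβ⟩

lemma continuousOn_thresholdUtility [Fintype G] (hX : Measurable X) (hp : Measurable p)
    (hgpos : ∀ a, 0 < μ {ω | g (X ω) = a}) (hdens : ∀ a, PosDensity01 (groupLaw μ X p g a))
    (c : ℝ) : ContinuousOn (thresholdUtility μ X p g c) (Icc 0 1) := by
  refine ContinuousOn.sub (continuousOn_finsetSum _ fun a _ => continuousOn_const.mul ?_)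
    (continuousOn_const.mul continuousOn_id)
  have := isProbabilityMeasure_groupLaw hX hp (hgpos a)
  have := (hdens a).nullSingletonClass
  exact (lipschitzOnWith_upperMean_threshold (hdens a).ae_mem_Icc).continuousOn

end GroupThresholds

section ThresholdRules

variable {Ω 𝒳 G : Type*} [MeasurableSpace Ω] [MeasurableSpace 𝒳] [MeasurableSpace G]
  [MeasurableSingletonClass G] {μ : Measure Ω} [IsProbabilityMeasure μ] {X : Ω → 𝒳}
  {p : 𝒳 → ℝ} {g : 𝒳 → G}

lemma measurable_thresholdRule [Countable G] (hp : Measurable p) (hg : Measurable g) (t : G → ℝ) :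
    Measurable fun x => if t (g x) ≤ p x then (1:ℝ) else 0 :=
  Measurable.ite (measurableSet_le ((measurable_of_countable t).comp hg) hp)
    measurable_const measurable_const

lemma setIntegral_fiber_thresholdRule (hX : Measurable X) (hp : Measurable p) (hg : Measurable g)
    (hgpos : ∀ a, 0 < μ {ω | g (X ω) = a}) (hdens : ∀ a, PosDensity01 (groupLaw μ X p g a))
    {β : ℝ} (hβ : β ∈ Icc (0:ℝ) 1) (a : G) :
    ∫ ω in {ω | g (X ω) = a},
        (if parityThreshold μ X p g β (g (X ω)) ≤ p (X ω) then 1 else 0) ∂μ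
      = μ.real {ω | g (X ω) = a} * β := by
  have hgX : Measurable fun ω => g (X ω) := hg.comp hX
  have hpX : Measurable fun ω => p (X ω) := hp.comp hX
  rw [setIntegral_fiber_congr hgX a
      fun b ω => if parityThreshold μ X p g β b ≤ p (X ω) then 1 else 0,
    setIntegral_ite_eq_mul_upperTail hpX]
  exact congrArg _ (parityThreshold_spec hX hp (hgpos a) (hdens a) hβ).2

lemma integral_thresholdRule [Fintype G] (hX : Measurable X) (hp : Measurable p) (hg : Measurable g)
    (hgpos : ∀ a, 0 < μ {ω | g (X ω) = a}) (hdens : ∀ a, PosDensity01 (groupLaw μ X p g a))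
    {β : ℝ} (hβ : β ∈ Icc (0:ℝ) 1) :
    ∫ ω, (if parityThreshold μ X p g β (g (X ω)) ≤ p (X ω) then 1 else 0) ∂μ = β := by
  have hgX : Measurable fun ω => g (X ω) := hg.comp hX
  have hint : Integrable
      (fun ω => if parityThreshold μ X p g β (g (X ω)) ≤ p (X ω) then (1:ℝ) else 0) μ :=
    integrable_of_mem_Icc ((measurable_thresholdRule hp hg _).comp hX).aestronglyMeasurable
      fun _ => by split_ifs <;> simp
  rw [integral_eq_sum_setIntegral_fiber hgX hint,
    Finset.sum_congr rfl fun a _ => setIntegral_fiber_thresholdRule hX hp hg hgpos hdens hβ a,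
    ← Finset.sum_mul, sum_measureReal_fiber hgX, one_mul]

lemma integral_mul_thresholdRule [Fintype G] (hX : Measurable X) (hp : Measurable p)
    (hp01 : ∀ x, p x ∈ Icc (0:ℝ) 1) (hg : Measurable g) (t : G → ℝ) :
    ∫ ω, p (X ω) * (if t (g (X ω)) ≤ p (X ω) then 1 else 0) ∂μ
      = ∑ a, μ.real {ω | g (X ω) = a} * upperMean (groupLaw μ X p g a) (t a) := by
  have hgX : Measurable fun ω => g (X ω) := hg.comp hX
  have hpX : Measurable fun ω => p (X ω) := hp.comp hX
  have hint : Integrable (fun ω => p (X ω) * (if t (g (X ω)) ≤ p (X ω) then (1:ℝ) else 0)) μ :=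
    integrable_of_mem_Icc
      (hpX.mul ((measurable_thresholdRule hp hg t).comp hX)).aestronglyMeasurable
      fun ω => unitInterval.mul_mem (hp01 _) (by split_ifs <;> simp)
  rw [integral_eq_sum_setIntegral_fiber hgX hint]
  refine Finset.sum_congr rfl fun a _ => ?_
  rw [setIntegral_fiber_congr hgX a fun b ω => p (X ω) * if t b ≤ p (X ω) then 1 else 0,
    setIntegral_mul_ite_eq_mul_upperMean hpX]
  rfl

lemma integral_mul_le_of_statParity [Fintype G] (hX : Measurable X) (hp : Measurable p)
    (hp01 : ∀ x, p x ∈ Icc (0:ℝ) 1) (hg : Measurable g) (hgpos : ∀ a, 0 < μ {ω | g (X ω) = a})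
    (hdens : ∀ a, PosDensity01 (groupLaw μ X p g a)) {d : 𝒳 → ℝ} (hd : Measurable d)
    (hd01 : ∀ x, d x ∈ Icc (0:ℝ) 1) (hpar : StatParity μ X g d) :
    ∫ ω, p (X ω) * d (X ω) ∂μ ≤ ∑ a, μ.real {ω | g (X ω) = a} *
      upperMean (groupLaw μ X p g a) (parityThreshold μ X p g (∫ ω, d (X ω) ∂μ) a) := by
  have hgX : Measurable fun ω => g (X ω) := hg.comp hX
  have hpX : Measurable fun ω => p (X ω) := hp.comp hX
  have hdX : Measurable fun ω => d (X ω) := hd.comp hX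
  have hβ := integral_mem_Icc_of_mem_Icc (μ := μ) hdX.aestronglyMeasurable fun ω => hd01 (X ω)
  have hint : Integrable (fun ω => p (X ω) * d (X ω)) μ :=
    integrable_of_mem_Icc (hpX.mul hdX).aestronglyMeasurable
      fun ω => unitInterval.mul_mem (hp01 _) (hd01 _)
  rw [integral_eq_sum_setIntegral_fiber hgX hint]
  refine Finset.sum_le_sum fun a _ => ?_
  set τ := parityThreshold μ X p g (∫ ω, d (X ω) ∂μ) a
  have hrate : ∫ ω in {ω | g (X ω) = a}, d (X ω) ∂μ
      = ∫ ω in {ω | g (X ω) = a}, (if τ ≤ p (X ω) then 1 else 0) ∂μ := by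
    rw [(statParity_iff hgpos).1 hpar a, setIntegral_ite_eq_mul_upperTail hpX]
    exact congrArg _ (parityThreshold_spec hX hp (hgpos a) (hdens a) hβ).2.symm
  calc ∫ ω in {ω | g (X ω) = a}, p (X ω) * d (X ω) ∂μ
      ≤ ∫ ω in {ω | g (X ω) = a}, p (X ω) * (if τ ≤ p (X ω) then 1 else 0) ∂μ :=
        integral_mul_le_integral_mul_ite hpX (integrable_of_mem_Icc hpX.aestronglyMeasurable
          fun ω => hp01 (X ω)) hdX (fun ω => hd01 (X ω)) τ hrate
    _ = _ := setIntegral_mul_ite_eq_mul_upperMean hpX _ τ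

end ThresholdRules

theorem stmt_3_general
    {Ω 𝒳 G : Type*} [MeasurableSpace Ω] [MeasurableSpace 𝒳]
    [Fintype G] [MeasurableSpace G] [MeasurableSingletonClass G]
    (μ : Measure Ω) [IsProbabilityMeasure μ]
    (X : Ω → 𝒳) (hX : Measurable X)
    (Y : Ω → ℝ)
    (p : 𝒳 → ℝ) (hp : Measurable p) (hp01 : ∀ x, p x ∈ Icc (0:ℝ) 1)
    (hrisk : ∀ f : 𝒳 → ℝ, Measurable f → (∃ C, ∀ x, |f x| ≤ C) →
      ∫ ω, Y ω * f (X ω) ∂μ = ∫ ω, p (X ω) * f (X ω) ∂μ)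
    (g : 𝒳 → G) (hg : Measurable g)
    (hgpos : ∀ a : G, 0 < μ {ω | g (X ω) = a})
    (hdens : ∀ a : G,
      PosDensity01 (Measure.map (fun ω => p (X ω))
        (ProbabilityTheory.cond μ {ω | g (X ω) = a})))
    (c : ℝ) :
    ∃ t : G → ℝ, (∀ a : G, t a ∈ Icc (0:ℝ) 1) ∧
      StatParity μ X g (fun x => if t (g x) ≤ p x then (1:ℝ) else 0) ∧
      ∀ d : 𝒳 → ℝ, Measurable d → (∀ x, d x ∈ Icc (0:ℝ) 1) →
        StatParity μ X g d →
        (∫ ω, Y ω * d (X ω) ∂μ) - c * ∫ ω, d (X ω) ∂μ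
          ≤ (∫ ω, Y ω * (if t (g (X ω)) ≤ p (X ω) then (1:ℝ) else 0) ∂μ)
              - c * ∫ ω, (if t (g (X ω)) ≤ p (X ω) then (1:ℝ) else 0) ∂μ := by
  have hbdd : ∀ {f : 𝒳 → ℝ}, (∀ x, f x ∈ Icc (0:ℝ) 1) → ∃ C, ∀ x, |f x| ≤ C := fun hf =>
    ⟨1, fun x => abs_le.2 ⟨by linarith [(hf x).1], (hf x).2⟩⟩
  obtain ⟨β, hβ, hmax⟩ := isCompact_Icc.exists_isMaxOn (nonempty_Icc.2 zero_le_one)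
    (continuousOn_thresholdUtility hX hp hgpos hdens c)
  have hfiber := setIntegral_fiber_thresholdRule hX hp hg hgpos hdens hβ
  have hrate := integral_thresholdRule hX hp hg hgpos hdens hβ
  refine ⟨parityThreshold μ X p g β,
    fun a => (parityThreshold_spec hX hp (hgpos a) (hdens a) hβ).1,
    (statParity_iff hgpos).2 fun a => (hfiber a).trans (congrArg _ hrate.symm),
    fun d hd hd01 hpar => ?_⟩
  rw [hrisk d hd (hbdd hd01), hrisk _ (measurable_thresholdRule hp hg _)
    (hbdd fun _ => by split_ifs <;> simp), integral_mul_thresholdRule hX hp hp01 hg, hrate]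
  calc _ ≤ thresholdUtility μ X p g c (∫ ω, d (X ω) ∂μ) :=
        sub_le_sub_right (integral_mul_le_of_statParity hX hp hp01 hg hgpos hdens hd hd01 hpar) _
    _ ≤ thresholdUtility μ X p g c β :=
        hmax (integral_mem_Icc_of_mem_Icc (hd.comp hX).aestronglyMeasurable fun ω => hd01 (X ω))

/-- there exist group-specific thresholds `t_a ∈ [0,1]` such that the
threshold rule `d*(x) = 1{p(x) ≥ t_{g(x)}}` satisfies statistical parity and maximizes
the immediate utility `u(·,c)` among decision rules satisfying statistical parity. -/
theorem stmt_3
    {Ω 𝒳 G : Type*} [MeasurableSpace Ω] [MeasurableSpace 𝒳]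
    [Fintype G] [MeasurableSpace G] [MeasurableSingletonClass G]
    (μ : Measure Ω) [IsProbabilityMeasure μ]
    (X : Ω → 𝒳) (hX : Measurable X)
    (Y : Ω → ℝ) (hY : Measurable Y) (hY01 : ∀ ω, Y ω = 0 ∨ Y ω = 1)
    (p : 𝒳 → ℝ) (hp : Measurable p) (hp01 : ∀ x, p x ∈ Icc (0:ℝ) 1)
    (hrisk : ∀ f : 𝒳 → ℝ, Measurable f → (∃ C, ∀ x, |f x| ≤ C) →
      ∫ ω, Y ω * f (X ω) ∂μ = ∫ ω, p (X ω) * f (X ω) ∂μ)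
    (g : 𝒳 → G) (hg : Measurable g)
    (hgpos : ∀ a : G, 0 < μ {ω | g (X ω) = a})
    (hdens : ∀ a : G,
      PosDensity01 (Measure.map (fun ω => p (X ω))
        (ProbabilityTheory.cond μ {ω | g (X ω) = a})))
    (c : ℝ) (hc0 : 0 < c) (hc1 : c < 1) :
    ∃ t : G → ℝ, (∀ a : G, t a ∈ Icc (0:ℝ) 1) ∧
      StatParity μ X g (fun x => if t (g x) ≤ p x then (1:ℝ) else 0) ∧
      ∀ d : 𝒳 → ℝ, Measurable d → (∀ x, d x ∈ Icc (0:ℝ) 1) →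
        StatParity μ X g d →
        (∫ ω, Y ω * d (X ω) ∂μ) - c * ∫ ω, d (X ω) ∂μ
          ≤ (∫ ω, Y ω * (if t (g (X ω)) ≤ p (X ω) then (1:ℝ) else 0) ∂μ)
              - c * ∫ ω, (if t (g (X ω)) ≤ p (X ω) then (1:ℝ) else 0) ∂μ :=
  stmt_3_general μ X hX Y p hp hp01 hrisk g hg hgpos hdens c
end
end

section
/- Suppose that for every group a ∈ G the conditional law of p(X) given g(X) = a has positive density on [0,1]. Fix α ∈ (0,1), and for each a ∈ G let t_a ∈ [0,1] be such that μ(p(X) ≥ t_a | g(X) = a) = α. Let d_α be the decision rule d_α(x) = 1 if p(x) ≥ t_{g(x)} and 0 otherwise. Then, among all decision rules d satisfying statistical parity with E[d(X)] = α, d_α maximizes E[Y·d(X)], and any other maximizer agrees with d_α μ-almost surely. -/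
open MeasureTheory ProbabilityTheory Set

noncomputable section

/-- Decompose an integral over a finite measurable partition. -/
lemma integral_groups {Ω G : Type*} [MeasurableSpace Ω] [Fintype G]
    (μ : Measure Ω) (S : G → Set Ω) (hSm : ∀ a, MeasurableSet (S a))
    (hcov : ∀ ω, ∃! a, ω ∈ S a) (f : Ω → ℝ) (hf : Integrable f μ) :
    ∫ ω, f ω ∂μ = ∑ a, ∫ ω in S a, f ω ∂μ := by
  have hpt : ∀ ω, f ω = ∑ a, (S a).indicator f ω := by
    intro ω
    obtain ⟨a, ha, hu⟩ := hcov ω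
    rw [Finset.sum_eq_single a]
    · simp [Set.indicator_of_mem ha]
    · intro b _ hb
      exact Set.indicator_of_notMem (fun h => hb (hu b h)) _
    · simp
  calc ∫ ω, f ω ∂μ = ∫ ω, ∑ a, (S a).indicator f ω ∂μ := by
        exact integral_congr_ae (Filter.Eventually.of_forall hpt)
    _ = ∑ a, ∫ ω, (S a).indicator f ω ∂μ :=
        integral_finset_sum _ (fun a _ => hf.indicator (hSm a))
    _ = ∑ a, ∫ ω in S a, f ω ∂μ := by
        refine Finset.sum_congr rfl fun a _ => integral_indicator (hSm a)

/-- with group-specific thresholds `t_a` chosen so that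
`μ(p(X) ≥ t_a | g(X) = a) = α` for each group, the rule `d_α(x) = 1{p(x) ≥ t_{g(x)}}`
satisfies statistical parity with detention rate `α`; among all decision rules satisfying
statistical parity with `E[d(X)] = α`, `d_α` maximizes `E[Y·d(X)]`, and any other
maximizer agrees with `d_α` μ-almost surely. -/
theorem stmt_5
    {Ω 𝒳 G : Type*} [MeasurableSpace Ω] [MeasurableSpace 𝒳]
    [Fintype G] [MeasurableSpace G] [MeasurableSingletonClass G]
    (μ : Measure Ω) [IsProbabilityMeasure μ]
    (X : Ω → 𝒳) (hX : Measurable X)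
    (Y : Ω → ℝ) (hY : Measurable Y) (hY01 : ∀ ω, Y ω = 0 ∨ Y ω = 1)
    (p : 𝒳 → ℝ) (hp : Measurable p) (hp01 : ∀ x, p x ∈ Icc (0:ℝ) 1)
    (hrisk : ∀ f : 𝒳 → ℝ, Measurable f → (∃ C, ∀ x, |f x| ≤ C) →
      ∫ ω, Y ω * f (X ω) ∂μ = ∫ ω, p (X ω) * f (X ω) ∂μ)
    (g : 𝒳 → G) (hg : Measurable g)
    (hgpos : ∀ a : G, 0 < μ {ω | g (X ω) = a})
    (hdens : ∀ a : G,
      PosDensity01 (Measure.map (fun ω => p (X ω))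
        (ProbabilityTheory.cond μ {ω | g (X ω) = a})))
    (α : ℝ) (hα : α ∈ Ioo (0:ℝ) 1)
    (t : G → ℝ) (ht : ∀ a : G, t a ∈ Icc (0:ℝ) 1)
    (htα : ∀ a : G,
      (μ ({ω | t a ≤ p (X ω)} ∩ {ω | g (X ω) = a})).toReal
        / (μ {ω | g (X ω) = a}).toReal = α) :
    StatParity μ X g (fun x => if t (g x) ≤ p x then (1:ℝ) else 0) ∧
    (∫ ω, (if t (g (X ω)) ≤ p (X ω) then (1:ℝ) else 0) ∂μ) = α ∧
    (∀ d : 𝒳 → ℝ, Measurable d → (∀ x, d x ∈ Icc (0:ℝ) 1) → StatParity μ X g d →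
      (∫ ω, d (X ω) ∂μ) = α →
      ∫ ω, Y ω * d (X ω) ∂μ
        ≤ ∫ ω, Y ω * (if t (g (X ω)) ≤ p (X ω) then (1:ℝ) else 0) ∂μ) ∧
    (∀ d : 𝒳 → ℝ, Measurable d → (∀ x, d x ∈ Icc (0:ℝ) 1) → StatParity μ X g d →
      (∫ ω, d (X ω) ∂μ) = α →
      (∫ ω, Y ω * d (X ω) ∂μ
        = ∫ ω, Y ω * (if t (g (X ω)) ≤ p (X ω) then (1:ℝ) else 0) ∂μ) →
      ∀ᵐ ω ∂μ, d (X ω) = (if t (g (X ω)) ≤ p (X ω) then (1:ℝ) else 0)) := by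
  classical
  set dα : 𝒳 → ℝ := fun x => if t (g x) ≤ p x then (1:ℝ) else 0 with hdα_def
  -- basic measurability
  have htg : Measurable fun x => t (g x) := (measurable_of_countable t).comp hg
  have hAfull : MeasurableSet {x | t (g x) ≤ p x} := measurableSet_le htg hp
  have hdαm : Measurable dα := Measurable.ite hAfull measurable_const measurable_const
  have hdα01 : ∀ x, dα x ∈ Icc (0:ℝ) 1 := by
    intro x; simp only [hdα_def]; split_ifs <;> norm_num
  -- the groups
  set S : G → Set Ω := fun a => {ω | g (X ω) = a} with hS_def
  have hSm : ∀ a, MeasurableSet (S a) := fun a => (hg.comp hX) (measurableSet_singleton a)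
  have hSfin : ∀ a, μ (S a) ≠ ⊤ := fun a => measure_ne_top μ _
  have hSr : ∀ a, 0 < (μ (S a)).toReal := fun a =>
    ENNReal.toReal_pos (hgpos a).ne' (hSfin a)
  have hcov : ∀ ω, ∃! a, ω ∈ S a := by
    intro ω
    refine ⟨g (X ω), rfl, fun b hb => hb.symm⟩
  have hsum1 : ∑ a, (μ (S a)).toReal = 1 := by
    have hU : (⋃ a, S a) = univ := by
      ext ω; simp only [mem_iUnion, mem_univ, iff_true]
      exact ⟨g (X ω), rfl⟩
    have hdisj : Pairwise (Function.onFun Disjoint S) := by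
      intro a b hab
      refine Set.disjoint_left.2 fun ω ha hb => hab ?_
      exact ha.symm.trans hb
    have := measure_iUnion hdisj hSm (μ := μ)
    rw [hU, measure_univ] at this
    have htR : ((∑' a, μ (S a)).toReal) = 1 := by rw [← this]; simp
    rw [tsum_fintype] at htR
    rw [← htR, ENNReal.toReal_sum (fun a _ => hSfin a)]
  -- integrability of bounded measurable functions
  have hInt : ∀ (f : Ω → ℝ), Measurable f → (∀ ω, |f ω| ≤ 1) → Integrable f μ := by
    intro f hf hb
    exact Integrable.mono' (integrable_const 1) hf.aestronglyMeasurable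
      (Filter.Eventually.of_forall fun ω => by simpa using hb ω)
  have habs01 : ∀ {u : ℝ}, u ∈ Icc (0:ℝ) 1 → |u| ≤ 1 := by
    intro u hu; rw [abs_le]; constructor <;> nlinarith [hu.1, hu.2]
  have hIntdα : Integrable (fun ω => dα (X ω)) μ :=
    hInt _ (hdαm.comp hX) (fun ω => habs01 (hdα01 _))
  -- group integral of dα
  have key : ∀ a, ∫ ω in S a, dα (X ω) ∂μ = α * (μ (S a)).toReal := by
    intro a
    have hTm : MeasurableSet {ω | t a ≤ p (X ω)} :=
      measurableSet_le measurable_const (hp.comp hX)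
    have h1 : ∀ ω ∈ S a, dα (X ω) =
        ({ω | t a ≤ p (X ω)}).indicator (fun _ => (1:ℝ)) ω := by
      intro ω hω
      have : g (X ω) = a := hω
      simp only [hdα_def, this, Set.indicator]
      rfl
    rw [setIntegral_congr_fun (hSm a) h1]
    rw [integral_indicator_const (1:ℝ) hTm]
    rw [measureReal_restrict_apply hTm]
    have := htα a
    rw [div_eq_iff (hSr a).ne'] at this
    simpa [smul_eq_mul, Measure.real] using this
  have hEdα : ∫ ω, dα (X ω) ∂μ = α := by
    rw [integral_groups μ S hSm hcov _ hIntdα]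
    calc ∑ a, ∫ ω in S a, dα (X ω) ∂μ = ∑ a, α * (μ (S a)).toReal := by
          exact Finset.sum_congr rfl fun a _ => key a
      _ = α * ∑ a, (μ (S a)).toReal := by rw [Finset.mul_sum]
      _ = α := by rw [hsum1, mul_one]
  have hpar : StatParity μ X g dα := by
    intro a
    show (∫ ω in S a, dα (X ω) ∂μ) / (μ (S a)).toReal = _
    rw [key a, hEdα, mul_div_assoc, div_self (hSr a).ne', mul_one]
  -- core inequality machinery, shared by optimality and uniqueness
  have hcore : ∀ d : 𝒳 → ℝ, Measurable d → (∀ x, d x ∈ Icc (0:ℝ) 1) →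
      StatParity μ X g d → (∫ ω, d (X ω) ∂μ) = α →
      (∫ ω, Y ω * d (X ω) ∂μ) - (∫ ω, Y ω * dα (X ω) ∂μ)
        = ∫ ω, (p (X ω) - t (g (X ω))) * (d (X ω) - dα (X ω)) ∂μ := by
    intro d hdm hd01 hdpar hdα'
    have hbd : ∀ x, |d x| ≤ 1 := fun x => habs01 (hd01 x)
    have hbdα : ∀ x, |dα x| ≤ 1 := fun x => habs01 (hdα01 x)
    have hDb : ∀ ω, |d (X ω) - dα (X ω)| ≤ 1 := by
      intro ω
      have h1 := (hd01 (X ω)); have h2 := (hdα01 (X ω))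
      rw [abs_le]; constructor <;> nlinarith [h1.1, h1.2, h2.1, h2.2]
    have hPTb : ∀ ω, |p (X ω) - t (g (X ω))| ≤ 1 := by
      intro ω
      have h1 := hp01 (X ω); have h2 := ht (g (X ω))
      rw [abs_le]; constructor <;> nlinarith [h1.1, h1.2, h2.1, h2.2]
    have hDm : Measurable fun ω => d (X ω) - dα (X ω) :=
      (hdm.comp hX).sub (hdαm.comp hX)
    have hIntD : Integrable (fun ω => d (X ω) - dα (X ω)) μ := hInt _ hDm hDb
    have hIntpD : Integrable (fun ω => p (X ω) * (d (X ω) - dα (X ω))) μ := by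
      refine hInt _ ((hp.comp hX).mul hDm) fun ω => ?_
      rw [abs_mul]
      calc |p (X ω)| * |d (X ω) - dα (X ω)| ≤ 1 * 1 := by
            exact mul_le_mul (habs01 (hp01 _)) (hDb ω) (abs_nonneg _) zero_le_one
        _ = 1 := one_mul 1
    have hIntH : Integrable
        (fun ω => (p (X ω) - t (g (X ω))) * (d (X ω) - dα (X ω))) μ := by
      refine hInt _ (((hp.comp hX).sub (htg.comp hX)).mul hDm) fun ω => ?_
      rw [abs_mul]
      calc _ ≤ 1 * 1 := mul_le_mul (hPTb ω) (hDb ω) (abs_nonneg _) zero_le_one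
        _ = (1:ℝ) := one_mul 1
    have hIntTD : Integrable (fun ω => t (g (X ω)) * (d (X ω) - dα (X ω))) μ := by
      refine hInt _ ((htg.comp hX).mul hDm) fun ω => ?_
      rw [abs_mul]
      calc _ ≤ 1 * 1 := mul_le_mul (habs01 (ht _)) (hDb ω) (abs_nonneg _) zero_le_one
        _ = (1:ℝ) := one_mul 1
    -- group integrals of d and dα agree
    have hgrp : ∀ a, ∫ ω in S a, (d (X ω) - dα (X ω)) ∂μ = 0 := by
      intro a
      have h1 : ∫ ω in S a, d (X ω) ∂μ = α * (μ (S a)).toReal := by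
        have := hdpar a
        rw [hdα'] at this
        rw [div_eq_iff (hSr a).ne'] at this
        exact this
      have hid : Integrable (fun ω => d (X ω)) μ :=
        hInt _ (hdm.comp hX) fun ω => hbd (X ω)
      rw [integral_sub hid.restrict hIntdα.restrict, h1, key a, sub_self]
    -- ∫ t(g X) * D = 0
    have hTD0 : ∫ ω, t (g (X ω)) * (d (X ω) - dα (X ω)) ∂μ = 0 := by
      rw [integral_groups μ S hSm hcov _ hIntTD]
      refine Finset.sum_eq_zero fun a _ => ?_
      have hcg : ∀ ω ∈ S a, t (g (X ω)) * (d (X ω) - dα (X ω))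
          = t a * (d (X ω) - dα (X ω)) := by
        intro ω hω
        have : g (X ω) = a := hω
        rw [this]
      rw [setIntegral_congr_fun (hSm a) hcg, integral_const_mul, hgrp a, mul_zero]
    have hr1 := hrisk d hdm ⟨1, hbd⟩
    have hr2 := hrisk dα hdαm ⟨1, hbdα⟩
    have hid : Integrable (fun ω => p (X ω) * d (X ω)) μ := by
      refine hInt _ ((hp.comp hX).mul (hdm.comp hX)) fun ω => ?_
      rw [abs_mul]
      calc _ ≤ 1 * 1 := mul_le_mul (habs01 (hp01 _)) (hbd _) (abs_nonneg _) zero_le_one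
        _ = (1:ℝ) := one_mul 1
    have hidα : Integrable (fun ω => p (X ω) * dα (X ω)) μ := by
      refine hInt _ ((hp.comp hX).mul (hdαm.comp hX)) fun ω => ?_
      rw [abs_mul]
      calc _ ≤ 1 * 1 := mul_le_mul (habs01 (hp01 _)) (hbdα _) (abs_nonneg _) zero_le_one
        _ = (1:ℝ) := one_mul 1
    rw [hr1, hr2, ← integral_sub hid hidα]
    have hpt : ∀ ω, p (X ω) * d (X ω) - p (X ω) * dα (X ω)
        = (p (X ω) - t (g (X ω))) * (d (X ω) - dα (X ω))
          + t (g (X ω)) * (d (X ω) - dα (X ω)) := by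
      intro ω; ring
    rw [integral_congr_ae (Filter.Eventually.of_forall hpt),
      integral_add hIntH hIntTD, hTD0, add_zero]
  -- pointwise sign of the core integrand
  have hsign : ∀ (d : 𝒳 → ℝ), (∀ x, d x ∈ Icc (0:ℝ) 1) → ∀ ω,
      (p (X ω) - t (g (X ω))) * (d (X ω) - dα (X ω)) ≤ 0 := by
    intro d hd01 ω
    by_cases hc : t (g (X ω)) ≤ p (X ω)
    · have hone : dα (X ω) = 1 := by simp [hdα_def, hc]
      exact mul_nonpos_of_nonneg_of_nonpos (sub_nonneg.2 hc)
        (by rw [hone]; linarith [(hd01 (X ω)).2])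
    · have hzero : dα (X ω) = 0 := by simp [hdα_def, hc]
      refine mul_nonpos_of_nonpos_of_nonneg ?_ ?_
      · push_neg at hc; linarith
      · rw [hzero]; linarith [(hd01 (X ω)).1]
  refine ⟨hpar, hEdα, ?_, ?_⟩
  · intro d hdm hd01 hdpar hdα'
    have h := hcore d hdm hd01 hdpar hdα'
    have hle : ∫ ω, (p (X ω) - t (g (X ω))) * (d (X ω) - dα (X ω)) ∂μ ≤ 0 :=
      integral_nonpos (hsign d hd01)
    linarith
  · intro d hdm hd01 hdpar hdα' heq
    have h := hcore d hdm hd01 hdpar hdα'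
    rw [heq, sub_self] at h
    -- the integrand is ≤ 0 with zero integral, hence a.e. zero
    have hbd : ∀ x, |d x| ≤ 1 := fun x => habs01 (hd01 x)
    have hDm : Measurable fun ω => d (X ω) - dα (X ω) :=
      (hdm.comp hX).sub (hdαm.comp hX)
    have hIntH : Integrable
        (fun ω => -((p (X ω) - t (g (X ω))) * (d (X ω) - dα (X ω)))) μ := by
      refine hInt _ (((hp.comp hX).sub (htg.comp hX)).mul hDm).neg fun ω => ?_
      rw [abs_neg, abs_mul]
      have h1 := hp01 (X ω); have h2 := ht (g (X ω))
      have h3 := hd01 (X ω); have h4 := hdα01 (X ω)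
      have e1 : |p (X ω) - t (g (X ω))| ≤ 1 := by
        rw [abs_le]; constructor <;> nlinarith [h1.1, h1.2, h2.1, h2.2]
      have e2 : |d (X ω) - dα (X ω)| ≤ 1 := by
        rw [abs_le]; constructor <;> nlinarith [h3.1, h3.2, h4.1, h4.2]
      calc _ ≤ 1 * 1 := mul_le_mul e1 e2 (abs_nonneg _) zero_le_one
        _ = (1:ℝ) := one_mul 1
    have hz : (fun ω => -((p (X ω) - t (g (X ω))) * (d (X ω) - dα (X ω)))) =ᵐ[μ] 0 := by
      rw [← integral_eq_zero_iff_of_nonneg]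
      · rw [integral_neg, ← h, neg_zero]
      · intro ω
        simpa using neg_nonneg.2 (hsign d hd01 ω)
      · exact hIntH
    -- p(X) ≠ t(g(X)) a.e.
    have hnull : μ {ω | p (X ω) = t (g (X ω))} = 0 := by
      have hsub : {ω | p (X ω) = t (g (X ω))}
          ⊆ ⋃ a, ((fun ω => p (X ω)) ⁻¹' {t a} ∩ S a) := by
        intro ω hω
        exact mem_iUnion.2 ⟨g (X ω), hω, rfl⟩
      refine measure_mono_null hsub (measure_iUnion_null fun a => ?_)
      obtain ⟨φ, hν, -, -⟩ := hdens a
      have hmap : (Measure.map (fun ω => p (X ω)) (μ[|S a])) {t a} = 0 := by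
        rw [hν]
        exact (withDensity_absolutelyContinuous volume φ) (measure_singleton _)
      have hpXm : Measurable fun ω => p (X ω) := hp.comp hX
      rw [Measure.map_apply hpXm (measurableSet_singleton _)] at hmap
      rw [cond_apply (hSm a)] at hmap
      rcases mul_eq_zero.1 hmap with hinv | hzero
      · exact absurd hinv (ENNReal.inv_ne_zero.2 (hSfin a))
      · rw [Set.inter_comm] at hzero
        exact hzero
    have hae : ∀ᵐ ω ∂μ, p (X ω) ≠ t (g (X ω)) := by
      rw [ae_iff]
      simpa using hnull
    filter_upwards [hz, hae] with ω h1 h2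
    have h1' : (p (X ω) - t (g (X ω))) * (d (X ω) - dα (X ω)) = 0 := by
      have := h1
      simp only [Pi.zero_apply, neg_eq_zero] at this
      exact this
    rcases mul_eq_zero.1 h1' with hc | hc
    · exact absurd (sub_eq_zero.1 hc) h2
    · exact sub_eq_zero.1 hc
end
end

section
/- Fix c with 0 < c < 1 and suppose that for every group a ∈ G the conditional law of p(X) given g(X) = a has positive density on [0,1]. For α ∈ [0,1], let d_α be the decision rule d_α(x) = 1 if p(x) ≥ t_a(α) and 0 otherwise, where t_a(α) ∈ [0,1] satisfies μ(p(X) ≥ t_a(α) | g(X) = a) = α for each a ∈ G. Then the function f(α) = u(d_α, c) = E[d_α(X)·p(X)] − c·α is strictly concave on [0,1], and hence has a unique maximizer on [0,1]. -/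
/-!
Split the expected gain over the groups: on `g(X) = a` it is `α ↦ ∫_{p(X) ≥ t_a(α)} p(X)`.
Raising `α` to `β` adds the slab `t_a(β) ≤ p(X) < t_a(α)`, of mass `(β - α) μ(g(X) = a)`, on
which `p(X)` lies between the two thresholds; as `p(X)` has no atoms within a group, it exceeds
`t_a(β)` on a set of positive mass. Hence the secant slope over `[α, β]` lies in
`(t_a(β), t_a(α)]` (times the group mass), so slopes over adjacent intervals strictly decrease
and each group's gain is strictly concave; it is Lipschitz because the thresholds lie in `[0,1]`.
A strictly concave function continuous on a compact interval has exactly one maximizer.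
-/

open MeasureTheory ProbabilityTheory Set

theorem StrictConcaveOn.finset_sum {ι 𝕜 E β : Type*} [Semiring 𝕜] [PartialOrder 𝕜]
    [AddCommMonoid E] [AddCommMonoid β] [PartialOrder β] [IsOrderedCancelAddMonoid β]
    [SMul 𝕜 E] [DistribMulAction 𝕜 β] {s : Set E} {f : ι → E → β} {I : Finset ι}
    (hI : I.Nonempty) (hf : ∀ i ∈ I, StrictConcaveOn 𝕜 s (f i)) :
    StrictConcaveOn 𝕜 s fun x => ∑ i ∈ I, f i x := by
  induction hI using Finset.Nonempty.cons_induction with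
  | singleton i => simpa using hf i (Finset.mem_singleton_self i)
  | cons i I hi hI ih =>
    simp only [Finset.sum_cons]
    exact (hf i (Finset.mem_cons_self i I)).add (ih fun j hj => hf j (Finset.mem_cons_of_mem hj))

theorem StrictConcaveOn.existsUnique_isMaxOn {s : Set ℝ} {f : ℝ → ℝ}
    (hf : StrictConcaveOn ℝ s f) (hfc : ContinuousOn f s) (hs : IsCompact s) (hne : s.Nonempty) :
    ∃! x, x ∈ s ∧ ∀ y ∈ s, f y ≤ f x := by
  obtain ⟨x, hx, hmax⟩ := hs.exists_isMaxOn hne hfc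
  exact ⟨x, ⟨hx, hmax⟩, fun y ⟨hy, hymax⟩ => hf.eq_of_isMaxOn hymax hmax hy hx⟩

section Threshold

variable {Ω : Type*} [MeasurableSpace Ω] {ν : Measure Ω} {q : Ω → ℝ} {a b : ℝ}

theorem setIntegral_preimage_Ici_sub_setIntegral_preimage_Ici (hq : Measurable q)
    (hint : Integrable q ν) (hab : a ≤ b) :
    ∫ ω in q ⁻¹' Ici a, q ω ∂ν - ∫ ω in q ⁻¹' Ici b, q ω ∂ν = ∫ ω in q ⁻¹' Ico a b, q ω ∂ν := by
  have hdisj : Disjoint (Ico a b) (Ici b) := (Iio_disjoint_Ici le_rfl).mono_left Ico_subset_Iio_self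
  rw [← Ico_union_Ici_eq_Ici hab, preimage_union, setIntegral_union (hdisj.preimage q)
    (hq measurableSet_Ici) hint.integrableOn hint.integrableOn]
  ring

theorem setIntegral_preimage_Ico_le_mul [IsFiniteMeasure ν] (hq : Measurable q)
    (hint : Integrable q ν) :
    ∫ ω in q ⁻¹' Ico a b, q ω ∂ν ≤ b * ν.real (q ⁻¹' Ico a b) := by
  calc ∫ ω in q ⁻¹' Ico a b, q ω ∂ν ≤ ∫ _ in q ⁻¹' Ico a b, b ∂ν :=
        setIntegral_mono_on hint.integrableOn integrableOn_const (hq measurableSet_Ico)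
          fun ω hω => hω.2.le
    _ = b * ν.real (q ⁻¹' Ico a b) := by rw [setIntegral_const, smul_eq_mul, mul_comm]

theorem mul_measureReal_lt_setIntegral_preimage_Ico [IsFiniteMeasure ν] (hq : Measurable q)
    (hint : Integrable q ν) (hatom : ∀ x, ν (q ⁻¹' {x}) = 0) (hpos : 0 < ν (q ⁻¹' Ico a b)) :
    a * ν.real (q ⁻¹' Ico a b) < ∫ ω in q ⁻¹' Ico a b, q ω ∂ν := by
  set A := q ⁻¹' Ico a b
  have hA : MeasurableSet A := hq measurableSet_Ico
  have hexcess : 0 < ∫ ω in A, (q ω - a) ∂ν := by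
    rw [setIntegral_pos_iff_support_of_nonneg_ae
      ((ae_restrict_iff' hA).2 (ae_of_all _ fun ω hω => sub_nonneg.2 hω.1))
      (hint.sub (integrable_const a)).integrableOn]
    refine hpos.trans_le ((measure_sdiff_null (hatom a)).symm.trans_le (measure_mono ?_))
    rintro ω ⟨hωA, hωa⟩
    exact ⟨sub_ne_zero.2 hωa, hωA⟩
  rwa [integral_sub hint.integrableOn integrableOn_const, setIntegral_const, smul_eq_mul,
    mul_comm, sub_pos] at hexcess

section Quantile

variable [IsFiniteMeasure ν] [NeZero ν] {τ : ℝ → ℝ}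

theorem antitoneOn_of_measureReal_preimage_Ici
    (hτ : ∀ α ∈ Icc (0:ℝ) 1, ν.real (q ⁻¹' Ici (τ α)) = α * ν.real univ) :
    AntitoneOn τ (Icc 0 1) := by
  intro α hα β hβ hαβ
  by_contra! hlt
  have hmono : ν.real (q ⁻¹' Ici (τ β)) ≤ ν.real (q ⁻¹' Ici (τ α)) :=
    measureReal_mono (preimage_mono (Ici_subset_Ici.2 hlt.le))
  rw [hτ β hβ, hτ α hα] at hmono
  have hβα : β ≤ α := le_of_mul_le_mul_right hmono measureReal_univ_pos
  exact hlt.ne (congrArg τ (le_antisymm hαβ hβα))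

theorem measureReal_preimage_Ico_of_measureReal_preimage_Ici (hq : Measurable q)
    (hτ : ∀ α ∈ Icc (0:ℝ) 1, ν.real (q ⁻¹' Ici (τ α)) = α * ν.real univ)
    {α β : ℝ} (hα : α ∈ Icc (0:ℝ) 1) (hβ : β ∈ Icc (0:ℝ) 1) (hαβ : α ≤ β) :
    ν.real (q ⁻¹' Ico (τ β) (τ α)) = (β - α) * ν.real univ := by
  have hsub : q ⁻¹' Ici (τ α) ⊆ q ⁻¹' Ici (τ β) :=
    preimage_mono (Ici_subset_Ici.2 (antitoneOn_of_measureReal_preimage_Ici hτ hα hβ hαβ))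
  rw [← Ici_sdiff_Ici, preimage_sdiff, measureReal_sdiff hsub (hq measurableSet_Ici),
    hτ β hβ, hτ α hα]
  ring

theorem setIntegral_preimage_Ici_sub_mem_Ioc (hq : Measurable q) (hint : Integrable q ν)
    (hatom : ∀ x, ν (q ⁻¹' {x}) = 0)
    (hτ : ∀ α ∈ Icc (0:ℝ) 1, ν.real (q ⁻¹' Ici (τ α)) = α * ν.real univ)
    {α β : ℝ} (hα : α ∈ Icc (0:ℝ) 1) (hβ : β ∈ Icc (0:ℝ) 1) (hαβ : α < β) :
    ∫ ω in q ⁻¹' Ici (τ β), q ω ∂ν - ∫ ω in q ⁻¹' Ici (τ α), q ω ∂ν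
      ∈ Ioc ((β - α) * ν.real univ * τ β) ((β - α) * ν.real univ * τ α) := by
  have hmass := measureReal_preimage_Ico_of_measureReal_preimage_Ici hq hτ hα hβ hαβ.le
  have hpos : 0 < ν (q ⁻¹' Ico (τ β) (τ α)) := by
    refine pos_of_ne_zero fun h0 => ?_
    rw [measureReal_def, h0, ENNReal.toReal_zero] at hmass
    exact (mul_pos (sub_pos.2 hαβ) measureReal_univ_pos).ne hmass
  rw [setIntegral_preimage_Ici_sub_setIntegral_preimage_Ici hq hint
    (antitoneOn_of_measureReal_preimage_Ici hτ hα hβ hαβ.le)]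
  constructor
  · calc (β - α) * ν.real univ * τ β = τ β * ν.real (q ⁻¹' Ico (τ β) (τ α)) := by
          rw [hmass]; ring
      _ < _ := mul_measureReal_lt_setIntegral_preimage_Ico hq hint hatom hpos
  · calc _ ≤ τ α * ν.real (q ⁻¹' Ico (τ β) (τ α)) := setIntegral_preimage_Ico_le_mul hq hint
      _ = (β - α) * ν.real univ * τ α := by rw [hmass]; ring

theorem strictConcaveOn_setIntegral_preimage_Ici (hq : Measurable q) (hint : Integrable q ν)
    (hatom : ∀ x, ν (q ⁻¹' {x}) = 0)
    (hτ : ∀ α ∈ Icc (0:ℝ) 1, ν.real (q ⁻¹' Ici (τ α)) = α * ν.real univ) :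
    StrictConcaveOn ℝ (Icc 0 1) fun α => ∫ ω in q ⁻¹' Ici (τ α), q ω ∂ν := by
  refine strictConcaveOn_of_slope_strict_anti_adjacent (convex_Icc 0 1) fun hx hz hxy hyz => ?_
  have hy : _ ∈ Icc (0:ℝ) 1 := ⟨hx.1.trans hxy.le, hyz.le.trans hz.2⟩
  calc _ ≤ ν.real univ * τ _ := (div_le_iff₀ (sub_pos.2 hyz)).2 <| by
        linarith [(setIntegral_preimage_Ici_sub_mem_Ioc hq hint hatom hτ hy hz hyz).2]
    _ < _ := (lt_div_iff₀ (sub_pos.2 hxy)).2 <| by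
        linarith [(setIntegral_preimage_Ici_sub_mem_Ioc hq hint hatom hτ hx hy hxy).1]

theorem lipschitzOnWith_setIntegral_preimage_Ici (hq : Measurable q) (hint : Integrable q ν)
    (hatom : ∀ x, ν (q ⁻¹' {x}) = 0)
    (hτ : ∀ α ∈ Icc (0:ℝ) 1, ν.real (q ⁻¹' Ici (τ α)) = α * ν.real univ)
    (hτ01 : MapsTo τ (Icc 0 1) (Icc 0 1)) :
    LipschitzOnWith (ν univ).toNNReal (fun α => ∫ ω in q ⁻¹' Ici (τ α), q ω ∂ν) (Icc 0 1) := by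
  have key : ∀ α ∈ Icc (0:ℝ) 1, ∀ β ∈ Icc (0:ℝ) 1, α < β →
      |∫ ω in q ⁻¹' Ici (τ β), q ω ∂ν - ∫ ω in q ⁻¹' Ici (τ α), q ω ∂ν|
        ≤ ν.real univ * (β - α) := by
    intro α hα β hβ hαβ
    obtain ⟨hlow, hup⟩ := setIntegral_preimage_Ici_sub_mem_Ioc hq hint hatom hτ hα hβ hαβ
    have hm : 0 ≤ (β - α) * ν.real univ := mul_nonneg (sub_pos.2 hαβ).le measureReal_nonneg
    rw [abs_le]
    constructor <;> nlinarith [(hτ01 hα).2, (hτ01 hβ).1]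
  refine LipschitzOnWith.of_dist_le_mul fun x hx y hy => ?_
  rw [ENNReal.coe_toNNReal_eq_toReal, ← measureReal_def, Real.dist_eq, Real.dist_eq]
  rcases lt_trichotomy x y with hxy | rfl | hyx
  · rw [abs_sub_comm, abs_sub_comm x, abs_of_pos (sub_pos.2 hxy)]
    exact key x hx y hy hxy
  · simp
  · rw [abs_of_pos (sub_pos.2 hyx)]
    exact key y hy x hx hyx

end Quantile

end Threshold

theorem integral_eq_sum_setIntegral_preimage_singleton {Ω G E : Type*} [MeasurableSpace Ω]
    [Fintype G] [MeasurableSpace G] [MeasurableSingletonClass G]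
    [NormedAddCommGroup E] [NormedSpace ℝ E] {μ : Measure Ω} {k : Ω → G} (hk : Measurable k)
    {F : G → Ω → E} (hF : ∀ a, Integrable (F a) μ) :
    ∫ ω, F (k ω) ω ∂μ = ∑ a, ∫ ω in k ⁻¹' {a}, F a ω ∂μ := by
  have hfiber : ∀ a, EqOn (fun ω => F (k ω) ω) (F a) (k ⁻¹' {a}) := fun a ω hω => by
    simp only [show k ω = a from hω]
  have hcover : (⋃ a, k ⁻¹' {a}) = univ := by
    ext ω
    simp
  rw [← setIntegral_univ, ← hcover,
    integral_iUnion_fintype (fun a => hk (measurableSet_singleton a))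
      (fun a b hab => (disjoint_singleton.2 hab).preimage k)
      fun a => ((hF a).integrableOn.congr_fun (hfiber a).symm (hk (measurableSet_singleton a)))]
  exact Finset.sum_congr rfl fun a _ =>
    setIntegral_congr_fun (hk (measurableSet_singleton a)) (hfiber a)

theorem integral_ite_le_mul_eq_sum_setIntegral {Ω G : Type*} [MeasurableSpace Ω]
    [Fintype G] [MeasurableSpace G] [MeasurableSingletonClass G] {μ : Measure Ω}
    {k : Ω → G} (hk : Measurable k) {q : Ω → ℝ} (hq : Measurable q) (hint : Integrable q μ)
    (θ : G → ℝ) :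
    ∫ ω, (if θ (k ω) ≤ q ω then (1:ℝ) else 0) * q ω ∂μ
      = ∑ a, ∫ ω in q ⁻¹' Ici (θ a), q ω ∂μ.restrict (k ⁻¹' {a}) := by
  have hind : ∀ ω, (if θ (k ω) ≤ q ω then (1:ℝ) else 0) * q ω
      = (q ⁻¹' Ici (θ (k ω))).indicator q ω := by
    intro ω
    by_cases h : θ (k ω) ≤ q ω <;> simp [h]
  simp_rw [hind]
  exact (integral_eq_sum_setIntegral_preimage_singleton hk
    (F := fun a => (q ⁻¹' Ici (θ a)).indicator q)
    fun a => hint.indicator (hq measurableSet_Ici)).trans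
    (Finset.sum_congr rfl fun a _ => integral_indicator (hq measurableSet_Ici))

section Conditioning

variable {Ω : Type*} [MeasurableSpace Ω] {μ : Measure Ω} [IsFiniteMeasure μ] {s : Set Ω}

theorem PosDensity01.restrict_preimage_singleton_eq_zero {q : Ω → ℝ} (hq : Measurable q)
    (h : PosDensity01 (Measure.map q μ[|s])) (x : ℝ) : μ.restrict s (q ⁻¹' {x}) = 0 := by
  obtain ⟨φ, hφ, -, -⟩ := h
  have hcond : μ[q ⁻¹' {x} | s] = 0 := by
    rw [← Measure.map_apply hq (measurableSet_singleton x), hφ]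
    exact withDensity_absolutelyContinuous _ _ Real.volume_singleton
  rw [ProbabilityTheory.cond, Measure.smul_apply, smul_eq_mul] at hcond
  exact (mul_eq_zero.1 hcond).resolve_left (ENNReal.inv_ne_zero.2 (measure_ne_top μ s))

theorem measureReal_restrict_eq_mul_of_toReal_div_eq {t : Set Ω} (ht : MeasurableSet t)
    (hs : μ s ≠ 0) {α : ℝ} (h : (μ (t ∩ s)).toReal / (μ s).toReal = α) :
    (μ.restrict s).real t = α * (μ.restrict s).real univ := by
  rw [div_eq_iff (ENNReal.toReal_pos hs (measure_ne_top μ s)).ne'] at h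
  rwa [measureReal_restrict_apply ht, measureReal_restrict_apply_univ, measureReal_def,
    measureReal_def]

end Conditioning

theorem stmt_6_general
    {Ω 𝒳 G : Type*} [MeasurableSpace Ω] [MeasurableSpace 𝒳]
    [Fintype G] [MeasurableSpace G] [MeasurableSingletonClass G]
    (μ : Measure Ω) [IsProbabilityMeasure μ]
    (X : Ω → 𝒳) (hX : Measurable X)
    (p : 𝒳 → ℝ) (hp : Measurable p) (hp01 : ∀ x, p x ∈ Icc (0:ℝ) 1)
    (g : 𝒳 → G) (hg : Measurable g)
    (hgpos : ∀ a : G, 0 < μ {ω | g (X ω) = a})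
    (hdens : ∀ a : G,
      PosDensity01 (Measure.map (fun ω => p (X ω))
        (ProbabilityTheory.cond μ {ω | g (X ω) = a})))
    (c : ℝ)
    (t : G → ℝ → ℝ)
    (ht : ∀ a : G, ∀ α ∈ Icc (0:ℝ) 1, t a α ∈ Icc (0:ℝ) 1 ∧
      (μ ({ω | t a α ≤ p (X ω)} ∩ {ω | g (X ω) = a})).toReal
        / (μ {ω | g (X ω) = a}).toReal = α) :
    StrictConcaveOn ℝ (Icc (0:ℝ) 1)
      (fun α =>
        (∫ ω, (if t (g (X ω)) α ≤ p (X ω) then (1:ℝ) else 0) * p (X ω) ∂μ) - c * α) ∧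
    ∃! α₀ : ℝ, α₀ ∈ Icc (0:ℝ) 1 ∧
      ∀ α ∈ Icc (0:ℝ) 1,
        (∫ ω, (if t (g (X ω)) α ≤ p (X ω) then (1:ℝ) else 0) * p (X ω) ∂μ) - c * α
          ≤ (∫ ω, (if t (g (X ω)) α₀ ≤ p (X ω) then (1:ℝ) else 0) * p (X ω) ∂μ)
              - c * α₀ := by
  have hq : Measurable fun ω => p (X ω) := hp.comp hX
  have hint : Integrable (fun ω => p (X ω)) μ :=
    .of_mem_Icc 0 1 hq.aemeasurable (ae_of_all _ fun ω => hp01 (X ω))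
  let F : G → ℝ → ℝ := fun a α =>
    ∫ ω in (fun ω => p (X ω)) ⁻¹' Ici (t a α), p (X ω) ∂μ.restrict {ω | g (X ω) = a}
  have hsplit : ∀ α, ∫ ω, (if t (g (X ω)) α ≤ p (X ω) then (1:ℝ) else 0) * p (X ω) ∂μ
      = ∑ a, F a α := fun α =>
    integral_ite_le_mul_eq_sum_setIntegral (hg.comp hX) hq hint fun a => t a α
  have hgroup : ∀ a, StrictConcaveOn ℝ (Icc 0 1) (F a) ∧ ContinuousOn (F a) (Icc 0 1) := by
    intro a
    have : NeZero (μ {ω | g (X ω) = a}) := ⟨(hgpos a).ne'⟩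
    have hatom := (hdens a).restrict_preimage_singleton_eq_zero hq
    have hτ := fun α hα => measureReal_restrict_eq_mul_of_toReal_div_eq (hq measurableSet_Ici)
      (hgpos a).ne' (ht a α hα).2
    exact ⟨strictConcaveOn_setIntegral_preimage_Ici hq hint.restrict hatom hτ,
      (lipschitzOnWith_setIntegral_preimage_Ici hq hint.restrict hatom hτ
        fun α hα => (ht a α hα).1).continuousOn⟩
  obtain ⟨ω⟩ := nonempty_of_isProbabilityMeasure μ
  have : Nonempty G := ⟨g (X ω)⟩
  have hconc : StrictConcaveOn ℝ (Icc (0:ℝ) 1) fun α => ∑ a, F a α - c * α :=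
    (StrictConcaveOn.finset_sum Finset.univ_nonempty fun a _ => (hgroup a).1).sub_convexOn
      ((c • LinearMap.id : ℝ →ₗ[ℝ] ℝ).convexOn (convex_Icc 0 1))
  have hcont : ContinuousOn (fun α => ∑ a, F a α - c * α) (Icc (0:ℝ) 1) :=
    (continuousOn_finsetSum _ fun a _ => (hgroup a).2).sub (continuousOn_const.mul continuousOn_id)
  simp only [hsplit]
  exact ⟨hconc, hconc.existsUnique_isMaxOn hcont isCompact_Icc (nonempty_Icc.2 zero_le_one)⟩

/-- with `d_α(x) = 1{p(x) ≥ t_{g(x)}(α)}` where the thresholds `t_a(α)`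
satisfy `μ(p(X) ≥ t_a(α) | g(X) = a) = α`, the function
`f(α) = E[d_α(X)·p(X)] − c·α` is strictly concave on `[0,1]` and hence has a unique
maximizer on `[0,1]`. -/
theorem stmt_6
    {Ω 𝒳 G : Type*} [MeasurableSpace Ω] [MeasurableSpace 𝒳]
    [Fintype G] [MeasurableSpace G] [MeasurableSingletonClass G]
    (μ : Measure Ω) [IsProbabilityMeasure μ]
    (X : Ω → 𝒳) (hX : Measurable X)
    (Y : Ω → ℝ) (hY : Measurable Y) (hY01 : ∀ ω, Y ω = 0 ∨ Y ω = 1)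
    (p : 𝒳 → ℝ) (hp : Measurable p) (hp01 : ∀ x, p x ∈ Icc (0:ℝ) 1)
    (g : 𝒳 → G) (hg : Measurable g)
    (hgpos : ∀ a : G, 0 < μ {ω | g (X ω) = a})
    (hdens : ∀ a : G,
      PosDensity01 (Measure.map (fun ω => p (X ω))
        (ProbabilityTheory.cond μ {ω | g (X ω) = a})))
    (c : ℝ) (hc0 : 0 < c) (hc1 : c < 1)
    (t : G → ℝ → ℝ)
    (ht : ∀ a : G, ∀ α ∈ Icc (0:ℝ) 1, t a α ∈ Icc (0:ℝ) 1 ∧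
      (μ ({ω | t a α ≤ p (X ω)} ∩ {ω | g (X ω) = a})).toReal
        / (μ {ω | g (X ω) = a}).toReal = α) :
    StrictConcaveOn ℝ (Icc (0:ℝ) 1)
      (fun α =>
        (∫ ω, (if t (g (X ω)) α ≤ p (X ω) then (1:ℝ) else 0) * p (X ω) ∂μ) - c * α) ∧
    ∃! α₀ : ℝ, α₀ ∈ Icc (0:ℝ) 1 ∧
      ∀ α ∈ Icc (0:ℝ) 1,
        (∫ ω, (if t (g (X ω)) α ≤ p (X ω) then (1:ℝ) else 0) * p (X ω) ∂μ) - c * α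
          ≤ (∫ ω, (if t (g (X ω)) α₀ ≤ p (X ω) then (1:ℝ) else 0) * p (X ω) ∂μ)
              - c * α₀ :=
  stmt_6_general μ X hX p hp hp01 g hg hgpos hdens c t ht
end

section
/- Fix c with 0 < c < 1, and suppose that for every group a ∈ G the conditional law of p(X) given g(X) = a has positive density on [0,1], and that μ(Y = 0, g(X) = a) > 0 for every a ∈ G. If d and d' are two decision rules that both satisfy predictive equality and both attain the maximum of u(·,c) over all decision rules satisfying predictive equality, then d(X) = d'(X) μ-almost surely. -/
/-!
The average `m = (d + d') / 2` of the two rules is again feasible and optimal, and `d = d'`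
wherever `m ∈ {0, 1}`; so it suffices that an optimal feasible rule is `{0, 1}`-valued a.s.
If instead `m ∈ [ε, 1 - ε]` on a non-null part `T` of one group, then, since the law of `p(X)`
on `T` has no atoms, a threshold `s` splits `T` into non-null pieces `S₁ = {p < s}` and
`S₂ = {p > s}`. Raising the rule on `S₂` and lowering it on `S₁` by steps at most `ε`, in
proportion to the `Y = 0` masses of `S₁` and `S₂`, leaves every `Y = 0` integral and hence
predictive equality unchanged, and raises the utility by `ε (1 - c) (M₁ P₂ - M₂ P₁) > 0`,
where `Mᵢ` and `Pᵢ` are the total and the `Y = 1` masses of `Sᵢ`: the mean of `p` is larger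
on `S₂` than on `S₁`.
-/

open MeasureTheory ProbabilityTheory Set

noncomputable section

/-- A decision rule `d` satisfies predictive equality. -/
def PredEq {Ω 𝒳 G : Type*} [MeasurableSpace Ω]
    (μ : Measure Ω) (X : Ω → 𝒳) (Y : Ω → ℝ) (g : 𝒳 → G) (d : 𝒳 → ℝ) : Prop :=
  ∀ a : G,
    (∫ ω in {ω | Y ω = 0 ∧ g (X ω) = a}, d (X ω) ∂μ)
        / (μ {ω | Y ω = 0 ∧ g (X ω) = a}).toReal
      = (∫ ω in {ω | Y ω = 0}, d (X ω) ∂μ) / (μ {ω | Y ω = 0}).toReal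

theorem exists_measure_Iio_pos_and_Ioi_pos {ν : Measure ℝ} [NullSingletonClass ν] (hν : ν ≠ 0) :
    ∃ s, 0 < ν (Iio s) ∧ 0 < ν (Ioi s) := by
  have split_between : ∀ {x y : ℝ}, x < y → x ∈ ν.support → y ∈ ν.support →
      ∃ s, 0 < ν (Iio s) ∧ 0 < ν (Ioi s) := fun {x y} hxy hx hy =>
    ⟨(x + y) / 2, (ν.mem_support_iff_forall x).1 hx _ (Iio_mem_nhds (by linarith)),
      (ν.mem_support_iff_forall y).1 hy _ (Ioi_mem_nhds (by linarith))⟩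
  obtain ⟨x, hx⟩ := ν.nonempty_support hν
  have hcompl : 0 < ν {x}ᶜ := by
    rw [compl_eq_univ_sdiff, measure_sdiff_null (measure_singleton x)]
    exact Measure.measure_univ_pos.2 hν
  obtain ⟨y, hyx, hy⟩ := Measure.nonempty_inter_support_of_pos hcompl
  rcases lt_or_gt_of_ne hyx with h | h
  exacts [split_between h hy hx, split_between h hx hy]

theorem PosDensity01.nullSingletonClass_map_restrict {Ω : Type*} [MeasurableSpace Ω] {μ : Measure Ω}
    [IsFiniteMeasure μ] {f : Ω → ℝ} (hf : Measurable f) {A B : Set Ω} (hBA : B ⊆ A)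
    (h : PosDensity01 ((μ[|A]).map f)) : NullSingletonClass ((μ.restrict B).map f) := by
  obtain ⟨φ, hφ, -⟩ := h
  have hB : μ.restrict B ≪ μ[|A] :=
    (Measure.restrict_mono hBA le_rfl).absolutelyContinuous.trans
      (Measure.absolutelyContinuous_smul (ENNReal.inv_ne_zero.2 (measure_ne_top μ A)))
  have hvol : (μ.restrict B).map f ≪ volume :=
    (hB.map hf).trans (hφ ▸ withDensity_absolutelyContinuous _ _)
  exact ⟨fun t => hvol (measure_singleton t)⟩

theorem setIntegral_pos_of_forall_pos {Ω : Type*} [MeasurableSpace Ω] {μ : Measure Ω}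
    {f : Ω → ℝ} {A : Set Ω} (hA : MeasurableSet A) (hA0 : μ A ≠ 0)
    (hf : IntegrableOn f A μ) (hpos : ∀ ω ∈ A, 0 < f ω) : 0 < ∫ ω in A, f ω ∂μ := by
  rw [setIntegral_pos_iff_support_of_nonneg_ae
    (ae_restrict_of_forall_mem hA fun ω hω => (hpos ω hω).le) hf,
    inter_eq_right.2 fun ω hω => Function.mem_support.2 (hpos ω hω).ne']
  exact pos_iff_ne_zero.2 hA0

theorem integral_add_mul_sub_mul {Ω : Type*} [MeasurableSpace Ω] {μ : Measure Ω}
    {f g h : Ω → ℝ} (hf : Integrable f μ) (hg : Integrable g μ) (hh : Integrable h μ)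
    (δ γ : ℝ) :
    ∫ ω, (f ω + δ * g ω - γ * h ω) ∂μ = ∫ ω, f ω ∂μ + δ * ∫ ω, g ω ∂μ - γ * ∫ ω, h ω ∂μ := by
  rw [integral_sub (f := fun ω => f ω + δ * g ω) (hf.add (hg.const_mul δ)) (hh.const_mul γ),
    integral_add hf (hg.const_mul δ), integral_const_mul, integral_const_mul]

theorem exists_nat_avg_mem_Icc_of_ne {a b : ℝ} (ha : a ∈ Icc (0:ℝ) 1) (hb : b ∈ Icc (0:ℝ) 1)
    (hab : a ≠ b) : ∃ n : ℕ, (a + b) / 2 ∈ Icc (1 / ((n:ℝ) + 1)) (1 - 1 / ((n:ℝ) + 1)) := by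
  obtain ⟨ha0, ha1⟩ := ha
  obtain ⟨hb0, hb1⟩ := hb
  have hpos : 0 < min ((a + b) / 2) (1 - (a + b) / 2) := by
    rcases lt_or_gt_of_ne hab with h | h <;> exact lt_min (by linarith) (by linarith)
  obtain ⟨n, hn⟩ := exists_nat_one_div_lt hpos
  exact ⟨n, by linarith [min_le_left ((a + b) / 2) (1 - (a + b) / 2)],
    by linarith [min_le_right ((a + b) / 2) (1 - (a + b) / 2)]⟩

theorem indicator_one_mem_Icc {α : Type*} (S : Set α) (x : α) :
    S.indicator (1 : α → ℝ) x ∈ Icc (0:ℝ) 1 := by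
  by_cases hx : x ∈ S <;> simp [hx]

theorem add_mul_indicator_sub_mul_indicator_mem_Icc {α : Type*} {m : α → ℝ} {S₁ S₂ : Set α}
    {ε δ γ : ℝ} (hm01 : ∀ x, m x ∈ Icc (0:ℝ) 1) (hdisj : Disjoint S₁ S₂)
    (hmS₁ : ∀ x ∈ S₁, ε ≤ m x) (hmS₂ : ∀ x ∈ S₂, m x ≤ 1 - ε) (hδ : δ ∈ Icc 0 ε)
    (hγ : γ ∈ Icc 0 ε) (x : α) :
    m x + δ * S₂.indicator 1 x - γ * S₁.indicator 1 x ∈ Icc (0:ℝ) 1 := by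
  obtain ⟨hm0, hm1⟩ := hm01 x
  obtain ⟨hδ0, hδε⟩ := hδ
  obtain ⟨hγ0, hγε⟩ := hγ
  by_cases h₂ : x ∈ S₂
  · have h₁ : x ∉ S₁ := hdisj.notMem_of_mem_right h₂
    have := hmS₂ x h₂
    simp only [indicator_of_mem h₂, indicator_of_notMem h₁, Pi.one_apply]
    constructor <;> linarith
  · by_cases h₁ : x ∈ S₁
    · have := hmS₁ x h₁
      simp only [indicator_of_mem h₁, indicator_of_notMem h₂, Pi.one_apply]
      constructor <;> linarith
    · simp only [indicator_of_notMem h₁, indicator_of_notMem h₂]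
      constructor <;> linarith

open Classical in
theorem setOf_eq_zero_and_eq_inter_preimage {Ω 𝒳 G : Type*} {X : Ω → 𝒳} {Y : Ω → ℝ}
    {g : 𝒳 → G} {a : G} {S : Set 𝒳} (hS : S ⊆ {x | g x = a}) (b : G) :
    {ω | Y ω = 0 ∧ g (X ω) = b} ∩ X ⁻¹' S =
      if b = a then {ω | Y ω = 0} ∩ X ⁻¹' S else ∅ := by
  split_ifs with hb
  · subst hb
    ext ω
    exact ⟨fun h => ⟨h.1.1, h.2⟩, fun h => ⟨⟨h.1, hS h.2⟩, h.2⟩⟩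
  · refine eq_empty_of_forall_notMem fun ω ⟨⟨_, hgb⟩, hx⟩ => hb ?_
    exact hgb.symm.trans (hS hx)

section DecisionRules

variable {Ω 𝒳 : Type*} [MeasurableSpace Ω]

def utility (μ : Measure Ω) (X : Ω → 𝒳) (Y : Ω → ℝ) (c : ℝ) (e : 𝒳 → ℝ) : ℝ :=
  (∫ ω, Y ω * e (X ω) ∂μ) - c * ∫ ω, e (X ω) ∂μ

/-- `p(X)` is a version of `E[Y | X]`. -/
def IsRiskScore [MeasurableSpace 𝒳] (μ : Measure Ω) (X : Ω → 𝒳) (Y : Ω → ℝ) (p : 𝒳 → ℝ) :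
    Prop :=
  ∀ f : 𝒳 → ℝ, Measurable f → (∃ C, ∀ x, |f x| ≤ C) →
    ∫ ω, Y ω * f (X ω) ∂μ = ∫ ω, p (X ω) * f (X ω) ∂μ

variable {μ : Measure Ω} {X : Ω → 𝒳} {Y : Ω → ℝ}

theorem MeasureTheory.Integrable.mul_of_eq_zero_or_one (hY : Measurable Y)
    (hY01 : ∀ ω, Y ω = 0 ∨ Y ω = 1) {f : Ω → ℝ} (hf : Integrable f μ) :
    Integrable (fun ω => Y ω * f ω) μ :=
  hf.bdd_mul (c := 1) hY.aestronglyMeasurable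
    (ae_of_all _ fun ω => by rcases hY01 ω with h | h <;> simp [h])

theorem utility_add_mul_sub_mul (hY : Measurable Y) (hY01 : ∀ ω, Y ω = 0 ∨ Y ω = 1)
    {m χ₁ χ₂ : 𝒳 → ℝ} (hm : Integrable (fun ω => m (X ω)) μ)
    (h₁ : Integrable (fun ω => χ₁ (X ω)) μ) (h₂ : Integrable (fun ω => χ₂ (X ω)) μ)
    (c δ γ : ℝ) :
    utility μ X Y c (fun x => m x + δ * χ₂ x - γ * χ₁ x) =
      utility μ X Y c m + δ * utility μ X Y c χ₂ - γ * utility μ X Y c χ₁ := by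
  have hY' : ∀ ω, Y ω * (m (X ω) + δ * χ₂ (X ω) - γ * χ₁ (X ω)) =
      Y ω * m (X ω) + δ * (Y ω * χ₂ (X ω)) - γ * (Y ω * χ₁ (X ω)) := fun ω => by ring
  simp_rw [utility, hY']
  rw [integral_add_mul_sub_mul hm h₂ h₁,
    integral_add_mul_sub_mul (hm.mul_of_eq_zero_or_one hY hY01)
      (h₂.mul_of_eq_zero_or_one hY hY01) (h₁.mul_of_eq_zero_or_one hY hY01)]
  ring

theorem utility_avg (hY : Measurable Y) (hY01 : ∀ ω, Y ω = 0 ∨ Y ω = 1) {d d' : 𝒳 → ℝ}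
    (hd : Integrable (fun ω => d (X ω)) μ) (hd' : Integrable (fun ω => d' (X ω)) μ) (c : ℝ) :
    utility μ X Y c (fun x => (d x + d' x) / 2) =
      (utility μ X Y c d + utility μ X Y c d') / 2 := by
  have hY' : ∀ ω, Y ω * ((d (X ω) + d' (X ω)) / 2) = (Y ω * d (X ω) + Y ω * d' (X ω)) / 2 :=
    fun ω => by ring
  simp_rw [utility, hY']
  rw [integral_div, integral_div, integral_add hd hd',
    integral_add (hd.mul_of_eq_zero_or_one hY hY01) (hd'.mul_of_eq_zero_or_one hY hY01)]
  ring

theorem PredEq.avg {G : Type*} {g : 𝒳 → G} {d d' : 𝒳 → ℝ}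
    (hd : Integrable (fun ω => d (X ω)) μ) (hd' : Integrable (fun ω => d' (X ω)) μ)
    (h : PredEq μ X Y g d) (h' : PredEq μ X Y g d') :
    PredEq μ X Y g (fun x => (d x + d' x) / 2) := by
  have hsplit : ∀ B : Set Ω, ∫ ω in B, (d (X ω) + d' (X ω)) / 2 ∂μ =
      ((∫ ω in B, d (X ω) ∂μ) + ∫ ω in B, d' (X ω) ∂μ) / 2 := fun B => by
    rw [integral_div, integral_add hd.integrableOn hd'.integrableOn]
  have hdiv : ∀ A A' D : ℝ, (A + A') / 2 / D = (A / D + A' / D) / 2 := fun _ _ _ => by ring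
  intro a
  rw [hsplit, hsplit, hdiv, hdiv, h a, h' a]

variable [MeasurableSpace 𝒳]

theorem integrable_comp_of_mem_Icc [IsFiniteMeasure μ] (hX : Measurable X) {e : 𝒳 → ℝ}
    (he : Measurable e) (he01 : ∀ x, e x ∈ Icc (0:ℝ) 1) : Integrable (fun ω => e (X ω)) μ :=
  .of_bound (he.comp hX).aestronglyMeasurable 1 (ae_of_all _ fun ω => by
    rw [Real.norm_of_nonneg (he01 (X ω)).1]; exact (he01 (X ω)).2)

theorem integral_indicator_one_comp (hX : Measurable X) {S : Set 𝒳} (hS : MeasurableSet S) :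
    ∫ ω, S.indicator 1 (X ω) ∂μ = μ.real (X ⁻¹' S) := by
  rw [← integral_indicator_one (hX hS)]
  rfl

theorem utility_indicator_one (hX : Measurable X) {S : Set 𝒳} (hS : MeasurableSet S) (c : ℝ) :
    utility μ X Y c (S.indicator 1) =
      ∫ ω, Y ω * S.indicator 1 (X ω) ∂μ - c * μ.real (X ⁻¹' S) := by
  rw [utility, integral_indicator_one_comp hX hS]

theorem measureReal_eq_zero_inter_preimage [IsFiniteMeasure μ] (hX : Measurable X)
    (hY : Measurable Y) (hY01 : ∀ ω, Y ω = 0 ∨ Y ω = 1) {S : Set 𝒳} (hS : MeasurableSet S) :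
    μ.real ({ω | Y ω = 0} ∩ X ⁻¹' S) =
      μ.real (X ⁻¹' S) - ∫ ω, Y ω * S.indicator 1 (X ω) ∂μ := by
  have hχ : Integrable (fun ω => S.indicator (1 : 𝒳 → ℝ) (X ω)) μ :=
    integrable_comp_of_mem_Icc hX (measurable_one.indicator hS) (indicator_one_mem_Icc S)
  rw [← integral_indicator_one_comp hX hS, ← integral_sub hχ (hχ.mul_of_eq_zero_or_one hY hY01),
    ← integral_indicator_one ((measurableSet_eq_fun hY measurable_const).inter (hX hS))]
  congr 1
  ext ω
  by_cases hx : X ω ∈ S <;> rcases hY01 ω with h | h <;> simp [hx, h]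

end DecisionRules

section Exchange

variable {Ω 𝒳 : Type*} [MeasurableSpace Ω] [MeasurableSpace 𝒳] {μ : Measure Ω} {X : Ω → 𝒳}
  {Y : Ω → ℝ}

theorem setIntegral_add_mul_indicator_sub_mul_indicator (hX : Measurable X) {m : 𝒳 → ℝ}
    (hm : Integrable (fun ω => m (X ω)) μ) {S₁ S₂ : Set 𝒳} (hS₁ : MeasurableSet S₁)
    (hS₂ : MeasurableSet S₂) (h₁ : Integrable (fun ω => S₁.indicator (1 : 𝒳 → ℝ) (X ω)) μ)
    (h₂ : Integrable (fun ω => S₂.indicator (1 : 𝒳 → ℝ) (X ω)) μ) (B : Set Ω) (δ γ : ℝ) :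
    ∫ ω in B, (m (X ω) + δ * S₂.indicator 1 (X ω) - γ * S₁.indicator 1 (X ω)) ∂μ =
      ∫ ω in B, m (X ω) ∂μ + δ * μ.real (B ∩ X ⁻¹' S₂) - γ * μ.real (B ∩ X ⁻¹' S₁) := by
  rw [integral_add_mul_sub_mul hm.integrableOn h₂.integrableOn h₁.integrableOn,
    integral_indicator_one_comp hX hS₂, integral_indicator_one_comp hX hS₁,
    measureReal_restrict_apply (hX hS₂), measureReal_restrict_apply (hX hS₁),
    inter_comm B, inter_comm B]

theorem exists_utility_gt_of_exchange [IsProbabilityMeasure μ] (hX : Measurable X)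
    (hY : Measurable Y) (hY01 : ∀ ω, Y ω = 0 ∨ Y ω = 1) {G : Type*} {g : 𝒳 → G} {a : G}
    {m : 𝒳 → ℝ} (hm : Measurable m) (hm01 : ∀ x, m x ∈ Icc (0:ℝ) 1) (hmP : PredEq μ X Y g m)
    {c ε : ℝ} (hc : c < 1) (hε : 0 < ε) {S₁ S₂ : Set 𝒳} (hS₁ : MeasurableSet S₁)
    (hS₂ : MeasurableSet S₂) (hdisj : Disjoint S₁ S₂) (hS₁a : S₁ ⊆ {x | g x = a})
    (hS₂a : S₂ ⊆ {x | g x = a}) (hmS₁ : ∀ x ∈ S₁, ε ≤ m x) (hmS₂ : ∀ x ∈ S₂, m x ≤ 1 - ε)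
    (hlt : μ.real (X ⁻¹' S₂) * ∫ ω, Y ω * S₁.indicator 1 (X ω) ∂μ <
      μ.real (X ⁻¹' S₁) * ∫ ω, Y ω * S₂.indicator 1 (X ω) ∂μ) :
    ∃ e : 𝒳 → ℝ, Measurable e ∧ (∀ x, e x ∈ Icc (0:ℝ) 1) ∧ PredEq μ X Y g e ∧
      utility μ X Y c m < utility μ X Y c e := by
  set q₁ := μ.real ({ω | Y ω = 0} ∩ X ⁻¹' S₁) with hq₁
  set q₂ := μ.real ({ω | Y ω = 0} ∩ X ⁻¹' S₂) with hq₂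
  have hmi := integrable_comp_of_mem_Icc (μ := μ) hX hm hm01
  have hχ₁ := integrable_comp_of_mem_Icc (μ := μ) hX (measurable_one.indicator hS₁)
    (indicator_one_mem_Icc S₁)
  have hχ₂ := integrable_comp_of_mem_Icc (μ := μ) hX (measurable_one.indicator hS₂)
    (indicator_one_mem_Icc S₂)
  -- moving `Y = 0`-mass `ε q₁ q₂` from `S₁` to `S₂` leaves every `Y = 0` set integral unchanged
  refine ⟨fun x => m x + ε * q₁ * S₂.indicator 1 x - ε * q₂ * S₁.indicator 1 x,
    (hm.add ((measurable_one.indicator hS₂).const_mul _)).sub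
      ((measurable_one.indicator hS₁).const_mul _), ?_, ?_, ?_⟩
  · have hδ : ∀ S, ε * μ.real ({ω | Y ω = 0} ∩ X ⁻¹' S) ∈ Icc 0 ε := fun S =>
      ⟨mul_nonneg hε.le measureReal_nonneg, mul_le_of_le_one_right hε.le measureReal_le_one⟩
    exact add_mul_indicator_sub_mul_indicator_mem_Icc hm01 hdisj hmS₁ hmS₂ (hδ _) (hδ _)
  · intro b
    simp only [setIntegral_add_mul_indicator_sub_mul_indicator hX hmi hS₁ hS₂ hχ₁ hχ₂,
      setOf_eq_zero_and_eq_inter_preimage hS₁a, setOf_eq_zero_and_eq_inter_preimage hS₂a]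
    have hshift : ∀ r : ℝ, r + ε * q₁ * q₂ - ε * q₂ * q₁ = r := fun r => by ring
    split_ifs <;>
      simp only [← hq₁, ← hq₂, measureReal_empty, mul_zero, sub_zero, add_zero, hshift] <;>
      exact hmP b
  · rw [utility_add_mul_sub_mul hY hY01 hmi hχ₁ hχ₂, utility_indicator_one hX hS₁, hq₁, hq₂,
      utility_indicator_one hX hS₂, measureReal_eq_zero_inter_preimage hX hY hY01 hS₁,
      measureReal_eq_zero_inter_preimage hX hY hY01 hS₂]
    set M₁ := μ.real (X ⁻¹' S₁)
    set M₂ := μ.real (X ⁻¹' S₂)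
    set P₁ := ∫ ω, Y ω * S₁.indicator 1 (X ω) ∂μ
    set P₂ := ∫ ω, Y ω * S₂.indicator 1 (X ω) ∂μ
    have hgain : ε * (M₁ - P₁) * (P₂ - c * M₂) - ε * (M₂ - P₂) * (P₁ - c * M₁) =
        ε * (1 - c) * (M₁ * P₂ - M₂ * P₁) := by ring
    have := mul_pos (mul_pos hε (sub_pos.2 hc)) (sub_pos.2 hlt)
    linarith

end Exchange

section Threshold

variable {Ω 𝒳 : Type*} [MeasurableSpace Ω] [MeasurableSpace 𝒳] {μ : Measure Ω} {X : Ω → 𝒳}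
  {Y : Ω → ℝ} {p : 𝒳 → ℝ}

theorem exists_threshold_split (hX : Measurable X) (hp : Measurable p) {T : Set 𝒳}
    (hT0 : μ (X ⁻¹' T) ≠ 0)
    [NullSingletonClass ((μ.restrict (X ⁻¹' T)).map (fun ω => p (X ω)))] :
    ∃ s, μ (X ⁻¹' (T ∩ {x | p x < s})) ≠ 0 ∧ μ (X ⁻¹' (T ∩ {x | s < p x})) ≠ 0 := by
  have hpX : Measurable (fun ω => p (X ω)) := hp.comp hX
  have hν : (μ.restrict (X ⁻¹' T)).map (fun ω => p (X ω)) ≠ 0 := by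
    rwa [Ne, Measure.map_eq_zero_iff hpX.aemeasurable, Measure.restrict_eq_zero]
  obtain ⟨s, h₁, h₂⟩ := exists_measure_Iio_pos_and_Ioi_pos hν
  rw [Measure.map_apply hpX measurableSet_Iio, Measure.restrict_apply (hpX measurableSet_Iio)]
    at h₁
  rw [Measure.map_apply hpX measurableSet_Ioi, Measure.restrict_apply (hpX measurableSet_Ioi)]
    at h₂
  exact ⟨s, by rw [preimage_inter, inter_comm]; exact h₁.ne',
    by rw [preimage_inter, inter_comm]; exact h₂.ne'⟩

theorem IsRiskScore.integral_mul_indicator (hX : Measurable X) (hrisk : IsRiskScore μ X Y p)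
    {S : Set 𝒳} (hS : MeasurableSet S) :
    ∫ ω, Y ω * S.indicator 1 (X ω) ∂μ = ∫ ω in X ⁻¹' S, p (X ω) ∂μ := by
  have hbound : ∀ x, |S.indicator (1 : 𝒳 → ℝ) x| ≤ 1 := fun x => by
    obtain ⟨h0, h1⟩ := indicator_one_mem_Icc S x
    exact abs_le.2 ⟨by linarith, h1⟩
  rw [hrisk _ (measurable_one.indicator hS) ⟨1, hbound⟩, ← integral_indicator (hX hS)]
  congr 1
  ext ω
  by_cases h : X ω ∈ S <;> simp [h]

theorem IsRiskScore.integral_mul_indicator_lt [IsFiniteMeasure μ] (hX : Measurable X)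
    (hp : Measurable p) (hp01 : ∀ x, p x ∈ Icc (0:ℝ) 1) (hrisk : IsRiskScore μ X Y p)
    {S : Set 𝒳} (hS : MeasurableSet S) (hS0 : μ (X ⁻¹' S) ≠ 0) {s : ℝ}
    (hlt : ∀ x ∈ S, p x < s) :
    ∫ ω, Y ω * S.indicator 1 (X ω) ∂μ < s * μ.real (X ⁻¹' S) := by
  have hpX := (integrable_comp_of_mem_Icc (μ := μ) hX hp hp01).integrableOn (s := X ⁻¹' S)
  have hs : IntegrableOn (fun _ => s) (X ⁻¹' S) μ := integrableOn_const
  rw [hrisk.integral_mul_indicator hX hS, ← sub_pos, mul_comm, ← smul_eq_mul,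
    ← setIntegral_const, ← integral_sub hs hpX]
  exact setIntegral_pos_of_forall_pos (hX hS) hS0 (hs.sub hpX) fun ω hω => sub_pos.2 (hlt _ hω)

theorem IsRiskScore.lt_integral_mul_indicator [IsFiniteMeasure μ] (hX : Measurable X)
    (hp : Measurable p) (hp01 : ∀ x, p x ∈ Icc (0:ℝ) 1) (hrisk : IsRiskScore μ X Y p)
    {S : Set 𝒳} (hS : MeasurableSet S) (hS0 : μ (X ⁻¹' S) ≠ 0) {s : ℝ}
    (hlt : ∀ x ∈ S, s < p x) :
    s * μ.real (X ⁻¹' S) < ∫ ω, Y ω * S.indicator 1 (X ω) ∂μ := by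
  have hpX := (integrable_comp_of_mem_Icc (μ := μ) hX hp hp01).integrableOn (s := X ⁻¹' S)
  have hs : IntegrableOn (fun _ => s) (X ⁻¹' S) μ := integrableOn_const
  rw [hrisk.integral_mul_indicator hX hS, ← sub_pos, mul_comm, ← smul_eq_mul,
    ← setIntegral_const, ← integral_sub hpX hs]
  exact setIntegral_pos_of_forall_pos (hX hS) hS0 (hpX.sub hs) fun ω hω => sub_pos.2 (hlt _ hω)

theorem exists_utility_gt_of_measure_ne_zero [IsProbabilityMeasure μ] (hX : Measurable X)
    (hY : Measurable Y) (hY01 : ∀ ω, Y ω = 0 ∨ Y ω = 1) (hp : Measurable p)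
    (hp01 : ∀ x, p x ∈ Icc (0:ℝ) 1) (hrisk : IsRiskScore μ X Y p) {G : Type*} {g : 𝒳 → G}
    {a : G} {m : 𝒳 → ℝ} (hm : Measurable m) (hm01 : ∀ x, m x ∈ Icc (0:ℝ) 1)
    (hmP : PredEq μ X Y g m) {c ε : ℝ} (hc : c < 1) (hε : 0 < ε) {T : Set 𝒳}
    (hT : MeasurableSet T) (hTa : T ⊆ {x | g x = a}) (hmT : ∀ x ∈ T, m x ∈ Icc ε (1 - ε))
    (hT0 : μ (X ⁻¹' T) ≠ 0)
    [NullSingletonClass ((μ.restrict (X ⁻¹' T)).map (fun ω => p (X ω)))] :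
    ∃ e : 𝒳 → ℝ, Measurable e ∧ (∀ x, e x ∈ Icc (0:ℝ) 1) ∧ PredEq μ X Y g e ∧
      utility μ X Y c m < utility μ X Y c e := by
  obtain ⟨s, h₁, h₂⟩ := exists_threshold_split hX hp hT0
  have hS₁ : MeasurableSet (T ∩ {x | p x < s}) := hT.inter (measurableSet_lt hp measurable_const)
  have hS₂ : MeasurableSet (T ∩ {x | s < p x}) := hT.inter (measurableSet_lt measurable_const hp)
  have hP₁ := hrisk.integral_mul_indicator_lt hX hp hp01 hS₁ h₁ fun x hx => hx.2
  have hP₂ := hrisk.lt_integral_mul_indicator hX hp hp01 hS₂ h₂ fun x hx => hx.2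
  have hM₁ : 0 < μ.real (X ⁻¹' (T ∩ {x | p x < s})) := ENNReal.toReal_pos h₁ (measure_ne_top _ _)
  have hM₂ : 0 < μ.real (X ⁻¹' (T ∩ {x | s < p x})) := ENNReal.toReal_pos h₂ (measure_ne_top _ _)
  refine exists_utility_gt_of_exchange hX hY hY01 hm hm01 hmP hc hε hS₁ hS₂
    (disjoint_left.2 fun x (hx₁ : _ ∧ p x < s) hx₂ => hx₁.2.not_gt hx₂.2)
    (inter_subset_left.trans hTa) (inter_subset_left.trans hTa) (fun x hx => (hmT x hx.1).1) (fun x hx => (hmT x hx.1).2) ?_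
  calc _ < μ.real (X ⁻¹' (T ∩ {x | s < p x})) * (s * μ.real (X ⁻¹' (T ∩ {x | p x < s}))) :=
        mul_lt_mul_of_pos_left hP₁ hM₂
    _ = μ.real (X ⁻¹' (T ∩ {x | p x < s})) * (s * μ.real (X ⁻¹' (T ∩ {x | s < p x}))) := by
        ring
    _ < _ := mul_lt_mul_of_pos_left hP₂ hM₁

end Threshold

theorem ae_eq_of_measure_avg_mem_Icc_eq_zero {Ω 𝒳 G : Type*} [MeasurableSpace Ω] [Countable G]
    {μ : Measure Ω} {X : Ω → 𝒳} {g : 𝒳 → G} {d d' : 𝒳 → ℝ} (hd01 : ∀ x, d x ∈ Icc (0:ℝ) 1)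
    (hd01' : ∀ x, d' x ∈ Icc (0:ℝ) 1)
    (hnull : ∀ (a : G) (n : ℕ), μ (X ⁻¹' ({x | g x = a} ∩
      {x | (d x + d' x) / 2 ∈ Icc (1 / ((n:ℝ) + 1)) (1 - 1 / ((n:ℝ) + 1))})) = 0) :
    ∀ᵐ ω ∂μ, d (X ω) = d' (X ω) := by
  rw [ae_iff]
  refine measure_mono_null (fun ω hω => ?_)
    (measure_iUnion_null fun a => measure_iUnion_null (hnull a))
  obtain ⟨n, hn⟩ := exists_nat_avg_mem_Icc_of_ne (hd01 (X ω)) (hd01' (X ω)) hω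
  exact mem_iUnion.2 ⟨g (X ω), mem_iUnion.2 ⟨n, rfl, hn⟩⟩

theorem stmt_8_general
    {Ω 𝒳 G : Type*} [MeasurableSpace Ω] [MeasurableSpace 𝒳]
    [Fintype G] [MeasurableSpace G] [MeasurableSingletonClass G]
    (μ : Measure Ω) [IsProbabilityMeasure μ]
    (X : Ω → 𝒳) (hX : Measurable X)
    (Y : Ω → ℝ) (hY : Measurable Y) (hY01 : ∀ ω, Y ω = 0 ∨ Y ω = 1)
    (p : 𝒳 → ℝ) (hp : Measurable p) (hp01 : ∀ x, p x ∈ Icc (0:ℝ) 1)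
    (hrisk : ∀ f : 𝒳 → ℝ, Measurable f → (∃ C, ∀ x, |f x| ≤ C) →
      ∫ ω, Y ω * f (X ω) ∂μ = ∫ ω, p (X ω) * f (X ω) ∂μ)
    (g : 𝒳 → G) (hg : Measurable g)
    (hdens : ∀ a : G,
      PosDensity01 (Measure.map (fun ω => p (X ω))
        (ProbabilityTheory.cond μ {ω | g (X ω) = a})))
    (c : ℝ) (hc1 : c < 1)
    (d d' : 𝒳 → ℝ)
    (hd : Measurable d) (hd01 : ∀ x, d x ∈ Icc (0:ℝ) 1) (hdP : PredEq μ X Y g d)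
    (hd' : Measurable d') (hd01' : ∀ x, d' x ∈ Icc (0:ℝ) 1) (hdP' : PredEq μ X Y g d')
    (hmax : ∀ e : 𝒳 → ℝ, Measurable e → (∀ x, e x ∈ Icc (0:ℝ) 1) → PredEq μ X Y g e →
      (∫ ω, Y ω * e (X ω) ∂μ) - c * ∫ ω, e (X ω) ∂μ
        ≤ (∫ ω, Y ω * d (X ω) ∂μ) - c * ∫ ω, d (X ω) ∂μ)
    (hmax' : ∀ e : 𝒳 → ℝ, Measurable e → (∀ x, e x ∈ Icc (0:ℝ) 1) → PredEq μ X Y g e →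
      (∫ ω, Y ω * e (X ω) ∂μ) - c * ∫ ω, e (X ω) ∂μ
        ≤ (∫ ω, Y ω * d' (X ω) ∂μ) - c * ∫ ω, d' (X ω) ∂μ) :
    ∀ᵐ ω ∂μ, d (X ω) = d' (X ω) := by
  set m : 𝒳 → ℝ := fun x => (d x + d' x) / 2
  have hdi := integrable_comp_of_mem_Icc (μ := μ) hX hd hd01
  have hdi' := integrable_comp_of_mem_Icc (μ := μ) hX hd' hd01'
  have hm : Measurable m := (hd.add hd').div_const 2
  have hm01 : ∀ x, m x ∈ Icc (0:ℝ) 1 := fun x => by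
    simp only [m, mem_Icc]
    constructor <;> linarith [(hd01 x).1, (hd01 x).2, (hd01' x).1, (hd01' x).2]
  have hum : utility μ X Y c m = utility μ X Y c d := by
    have h := hmax d' hd' hd01' hdP'
    have h' := hmax' d hd hd01 hdP
    rw [utility_avg hY hY01 hdi hdi']
    unfold utility
    linarith
  have hnull : ∀ (a : G) (n : ℕ),
      μ (X ⁻¹' ({x | g x = a} ∩ m ⁻¹' Icc (1 / ((n:ℝ) + 1)) (1 - 1 / ((n:ℝ) + 1)))) = 0 := by
    intro a n
    set T : Set 𝒳 := {x | g x = a} ∩ m ⁻¹' Icc (1 / ((n:ℝ) + 1)) (1 - 1 / ((n:ℝ) + 1))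
    by_contra hT0
    have hT : MeasurableSet T := (hg (measurableSet_singleton a)).inter (hm measurableSet_Icc)
    have hTa : X ⁻¹' T ⊆ {ω | g (X ω) = a} := fun ω hω => hω.1
    have := (hdens a).nullSingletonClass_map_restrict (f := fun ω => p (X ω)) (hp.comp hX) hTa
    obtain ⟨e, he, he01, heP, hlt⟩ := exists_utility_gt_of_measure_ne_zero hX hY hY01 hp
      hp01 hrisk hm hm01 (hdP.avg hdi hdi' hdP') hc1 Nat.one_div_pos_of_nat hT
      inter_subset_left (fun x hx => hx.2) hT0
    rw [hum] at hlt
    exact (hmax e he he01 heP).not_gt hlt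
  exact ae_eq_of_measure_avg_mem_Icc_eq_zero hd01 hd01' hnull

/-- if `d` and `d'` both satisfy predictive equality and both attain the
maximum of `u(·,c)` over decision rules satisfying predictive equality, then
`d(X) = d'(X)` μ-almost surely. -/
theorem stmt_8
    {Ω 𝒳 G : Type*} [MeasurableSpace Ω] [MeasurableSpace 𝒳]
    [Fintype G] [MeasurableSpace G] [MeasurableSingletonClass G]
    (μ : Measure Ω) [IsProbabilityMeasure μ]
    (X : Ω → 𝒳) (hX : Measurable X)
    (Y : Ω → ℝ) (hY : Measurable Y) (hY01 : ∀ ω, Y ω = 0 ∨ Y ω = 1)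
    (p : 𝒳 → ℝ) (hp : Measurable p) (hp01 : ∀ x, p x ∈ Icc (0:ℝ) 1)
    (hrisk : ∀ f : 𝒳 → ℝ, Measurable f → (∃ C, ∀ x, |f x| ≤ C) →
      ∫ ω, Y ω * f (X ω) ∂μ = ∫ ω, p (X ω) * f (X ω) ∂μ)
    (g : 𝒳 → G) (hg : Measurable g)
    (hgpos : ∀ a : G, 0 < μ {ω | g (X ω) = a})
    (hdens : ∀ a : G,
      PosDensity01 (Measure.map (fun ω => p (X ω))
        (ProbabilityTheory.cond μ {ω | g (X ω) = a})))
    (hY0pos : ∀ a : G, 0 < μ {ω | Y ω = 0 ∧ g (X ω) = a})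
    (c : ℝ) (hc0 : 0 < c) (hc1 : c < 1)
    (d d' : 𝒳 → ℝ)
    (hd : Measurable d) (hd01 : ∀ x, d x ∈ Icc (0:ℝ) 1) (hdP : PredEq μ X Y g d)
    (hd' : Measurable d') (hd01' : ∀ x, d' x ∈ Icc (0:ℝ) 1) (hdP' : PredEq μ X Y g d')
    (hmax : ∀ e : 𝒳 → ℝ, Measurable e → (∀ x, e x ∈ Icc (0:ℝ) 1) → PredEq μ X Y g e →
      (∫ ω, Y ω * e (X ω) ∂μ) - c * ∫ ω, e (X ω) ∂μ
        ≤ (∫ ω, Y ω * d (X ω) ∂μ) - c * ∫ ω, d (X ω) ∂μ)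
    (hmax' : ∀ e : 𝒳 → ℝ, Measurable e → (∀ x, e x ∈ Icc (0:ℝ) 1) → PredEq μ X Y g e →
      (∫ ω, Y ω * e (X ω) ∂μ) - c * ∫ ω, e (X ω) ∂μ
        ≤ (∫ ω, Y ω * d' (X ω) ∂μ) - c * ∫ ω, d' (X ω) ∂μ) :
    ∀ᵐ ω ∂μ, d (X ω) = d' (X ω) :=
  stmt_8_general μ X hX Y hY hY01 p hp hp01 hrisk g hg hdens c hc1 d d' hd hd01 hdP hd' hd01' hdP'
    hmax hmax'
end
end

section
/- Let a ∈ G, let d be a decision rule, and let t ∈ [0,1] satisfy μ(p(X) = t) = 0 and μ(p(X) ≥ t | g(X) = a) = E[d(X) | g(X) = a]. Then E[1{p(X) ≥ t}·(1 − d(X)) | g(X) = a] = E[1{p(X) < t}·d(X) | g(X) = a]; moreover this common value equals 0 if and only if d(X) = 1{p(X) ≥ t} almost surely on the event {g(X) = a}. -/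
open MeasureTheory Set

/-!
Restrict `μ` to the group event `A = {g(X) = a}` and put `S = {p(X) ≥ t}`, `D = d(X) ∈ [0,1]`.
Then `∫_S (1 - D) = μ(S ∩ A) - ∫_S D` and `∫_{Sᶜ} D = ∫_A D - ∫_S D`, so the rate condition
`μ(S ∩ A) = ∫_A D` makes the two error terms equal. Both integrands are nonnegative, so their
common value vanishes iff `D = 1` a.e. on `S` and `D = 0` a.e. off `S`, i.e. `D = 1_S` a.e. on `A`.
-/

section
variable {Ω : Type*} [MeasurableSpace Ω] {ν : Measure Ω} [IsFiniteMeasure ν] {S : Set Ω}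
  {D : Ω → ℝ}

theorem setIntegral_one_sub_eq_setIntegral_compl (hS : MeasurableSet S)
    (hD : Integrable D ν) (hmass : ν.real S = ∫ x, D x ∂ν) :
    ∫ x in S, (1 - D x) ∂ν = ∫ x in Sᶜ, D x ∂ν := by
  rw [integral_sub (integrable_const 1) hD.integrableOn, setIntegral_const, smul_eq_mul, mul_one,
    hmass, ← integral_add_compl hS hD, add_sub_cancel_left]

theorem ae_eq_indicator_one_iff_setIntegral_eq_zero (hS : MeasurableSet S)
    (hD : Integrable D ν) (hD0 : ∀ x, 0 ≤ D x) (hD1 : ∀ x, D x ≤ 1) :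
    D =ᵐ[ν] S.indicator 1 ↔ ∫ x in S, (1 - D x) ∂ν = 0 ∧ ∫ x in Sᶜ, D x ∂ν = 0 := by
  have hS_iff : ∫ x in S, (1 - D x) ∂ν = 0 ↔ D =ᵐ[ν.restrict S] 1 := by
    rw [integral_eq_zero_iff_of_nonneg (fun x => sub_nonneg.2 (hD1 x))
      ((integrable_const 1).integrableOn.sub hD.integrableOn)]
    exact ⟨fun h => h.mono fun x hx => (sub_eq_zero.1 hx).symm,
      fun h => h.mono fun x hx => sub_eq_zero.2 hx.symm⟩
  have hSc_iff : ∫ x in Sᶜ, D x ∂ν = 0 ↔ D =ᵐ[ν.restrict Sᶜ] 0 :=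
    integral_eq_zero_iff_of_nonneg hD0 hD.integrableOn
  rw [hS_iff, hSc_iff, ← (indicator_ae_eq_restrict hS).congr_right,
    ← (indicator_ae_eq_restrict_compl hS).congr_right, Filter.EventuallyEq, Filter.EventuallyEq,
    Filter.EventuallyEq, ← ae_restrict_union_iff, union_compl_self, Measure.restrict_univ]

end

theorem setIntegral_ite_one_mul {Ω : Type*} [MeasurableSpace Ω] (μ : Measure Ω) (A : Set Ω)
    {P : Ω → Prop} [DecidablePred P] (hP : MeasurableSet {x | P x}) (f : Ω → ℝ) :
    ∫ x in A, (if P x then (1 : ℝ) else 0) * f x ∂μ = ∫ x in {x | P x}, f x ∂μ.restrict A := by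
  rw [← integral_indicator hP]
  congr with x
  simp [indicator_apply]

theorem stmt_12_general
    {Ω 𝒳 G : Type*} [MeasurableSpace Ω] [MeasurableSpace 𝒳]
    (μ : Measure Ω) [IsProbabilityMeasure μ]
    (X : Ω → 𝒳) (hX : Measurable X)
    (p : 𝒳 → ℝ) (hp : Measurable p)
    (g : 𝒳 → G)
    (hgpos : ∀ a : G, 0 < μ {ω | g (X ω) = a})
    (a : G)
    (d : 𝒳 → ℝ) (hd : Measurable d) (hd01 : ∀ x, d x ∈ Icc (0:ℝ) 1)
    (t : ℝ)
    (hrate : (μ ({ω | t ≤ p (X ω)} ∩ {ω | g (X ω) = a})).toReal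
          / (μ {ω | g (X ω) = a}).toReal
        = (∫ ω in {ω | g (X ω) = a}, d (X ω) ∂μ) / (μ {ω | g (X ω) = a}).toReal) :
    ((∫ ω in {ω | g (X ω) = a},
          (if t ≤ p (X ω) then (1:ℝ) else 0) * (1 - d (X ω)) ∂μ)
        / (μ {ω | g (X ω) = a}).toReal
      = (∫ ω in {ω | g (X ω) = a},
          (if p (X ω) < t then (1:ℝ) else 0) * d (X ω) ∂μ)
        / (μ {ω | g (X ω) = a}).toReal) ∧
    ((∫ ω in {ω | g (X ω) = a},
          (if t ≤ p (X ω) then (1:ℝ) else 0) * (1 - d (X ω)) ∂μ)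
        / (μ {ω | g (X ω) = a}).toReal = 0
      ↔ ∀ᵐ ω ∂μ, g (X ω) = a →
          d (X ω) = (if t ≤ p (X ω) then (1:ℝ) else 0)) := by
  set A := {ω | g (X ω) = a}
  set S := {ω | t ≤ p (X ω)}
  have hS : MeasurableSet S := measurableSet_le measurable_const (hp.comp hX)
  have hSc : {ω | p (X ω) < t} = Sᶜ := by ext; simp [S]
  have hA : (μ A).toReal ≠ 0 := (ENNReal.toReal_pos (hgpos a).ne' (measure_ne_top μ A)).ne'
  have hD : Integrable (fun ω => d (X ω)) (μ.restrict A) :=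
    .of_bound (hd.comp hX).aestronglyMeasurable 1 <| ae_of_all _ fun ω =>
      abs_le.2 ⟨by linarith [(hd01 (X ω)).1], (hd01 (X ω)).2⟩
  have hmass : (μ.restrict A).real S = ∫ ω in A, d (X ω) ∂μ := by
    rw [measureReal_restrict_apply hS, measureReal_def]
    exact (div_left_inj' hA).1 hrate
  have hbalance := setIntegral_one_sub_eq_setIntegral_compl hS hD hmass
  have hae : (∀ᵐ ω ∂μ, g (X ω) = a → d (X ω) = if t ≤ p (X ω) then (1:ℝ) else 0)
      ↔ (fun ω => d (X ω)) =ᵐ[μ.restrict A] S.indicator 1 := by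
    rw [Filter.EventuallyEq, ae_restrict_iff (measurableSet_eq_fun (f := fun ω => d (X ω))
      (hd.comp hX) (measurable_one.indicator hS))]
    simp [S, A, indicator_apply]
  rw [setIntegral_ite_one_mul μ A hS, setIntegral_ite_one_mul μ A (hSc ▸ hS.compl), hSc,
    hbalance, hae,
    ae_eq_indicator_one_iff_setIntegral_eq_zero hS hD (fun ω => (hd01 (X ω)).1)
      (fun ω => (hd01 (X ω)).2), hbalance, and_self, div_eq_zero_iff, or_iff_left hA]
  exact ⟨rfl, Iff.rfl⟩

/-- if `t ∈ [0,1]` satisfies `μ(p(X) = t) = 0` and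
`μ(p(X) ≥ t | g(X) = a) = E[d(X) | g(X) = a]`, then
`E[1{p(X) ≥ t}(1 − d(X)) | g(X) = a] = E[1{p(X) < t} d(X) | g(X) = a]`, and this
common value is `0` iff `d(X) = 1{p(X) ≥ t}` a.s. on the event `{g(X) = a}`. -/
theorem stmt_12
    {Ω 𝒳 G : Type*} [MeasurableSpace Ω] [MeasurableSpace 𝒳]
    [Fintype G] [MeasurableSpace G] [MeasurableSingletonClass G]
    (μ : Measure Ω) [IsProbabilityMeasure μ]
    (X : Ω → 𝒳) (hX : Measurable X)
    (Y : Ω → ℝ) (hY : Measurable Y) (hY01 : ∀ ω, Y ω = 0 ∨ Y ω = 1)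
    (p : 𝒳 → ℝ) (hp : Measurable p) (hp01 : ∀ x, p x ∈ Icc (0:ℝ) 1)
    (g : 𝒳 → G) (hg : Measurable g)
    (hgpos : ∀ a : G, 0 < μ {ω | g (X ω) = a})
    (a : G)
    (d : 𝒳 → ℝ) (hd : Measurable d) (hd01 : ∀ x, d x ∈ Icc (0:ℝ) 1)
    (t : ℝ) (ht : t ∈ Icc (0:ℝ) 1)
    (hatom : μ {ω | p (X ω) = t} = 0)
    (hrate : (μ ({ω | t ≤ p (X ω)} ∩ {ω | g (X ω) = a})).toReal
          / (μ {ω | g (X ω) = a}).toReal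
        = (∫ ω in {ω | g (X ω) = a}, d (X ω) ∂μ) / (μ {ω | g (X ω) = a}).toReal) :
    ((∫ ω in {ω | g (X ω) = a},
          (if t ≤ p (X ω) then (1:ℝ) else 0) * (1 - d (X ω)) ∂μ)
        / (μ {ω | g (X ω) = a}).toReal
      = (∫ ω in {ω | g (X ω) = a},
          (if p (X ω) < t then (1:ℝ) else 0) * d (X ω) ∂μ)
        / (μ {ω | g (X ω) = a}).toReal) ∧
    ((∫ ω in {ω | g (X ω) = a},
          (if t ≤ p (X ω) then (1:ℝ) else 0) * (1 - d (X ω)) ∂μ)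
        / (μ {ω | g (X ω) = a}).toReal = 0
      ↔ ∀ᵐ ω ∂μ, g (X ω) = a →
          d (X ω) = (if t ≤ p (X ω) then (1:ℝ) else 0)) :=
  stmt_12_general μ X hX p hp g hgpos a d hd hd01 t hrate
end
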